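/- arXiv:1808.02660 — 6 statements merged into one kernel-verified Lean document; each statement's English description precedes it below -/
import Mathlib

section
/- A bipartite graph G = (X, Y; E) contains an f-factor (a spanning subgraph F with d_F(v) = f(v) for all vertices v) if and only if the sums of f over X and over Y are equal and for every subset A ⊆ X, the sum of f(x) over x ∈ A is at most the sum over y ∈ N_G(A) of min{f(y), d_A(y)}. -/
open SimpleGraph

section OreRyserAuxSec
open Finset

set_option linter.unusedSectionVars false

namespace OreRyserAux

variable {V : Type*} [Fintype V] [DecidableEq V]

def dd (G : SimpleGraph V) [DecidableRel G.Adj] (A : Finset V) (y : V) : ℕ :=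
  (A.filter fun x => G.Adj y x).card

def gg (G : SimpleGraph V) [DecidableRel G.Adj] (f : V → ℕ) (A : Finset V) : ℕ :=
  ∑ y, min (f y) (dd G A y)

lemma dd_mono (G : SimpleGraph V) [DecidableRel G.Adj] {A B : Finset V} (h : A ⊆ B) (y : V) :
    dd G A y ≤ dd G B y :=
  card_le_card (filter_subset_filter _ h)

lemma dd_union_inter (G : SimpleGraph V) [DecidableRel G.Adj] (A B : Finset V) (y : V) :
    dd G (A ∪ B) y + dd G (A ∩ B) y = dd G A y + dd G B y := by
  unfold dd
  rw [filter_union, filter_inter_distrib]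
  exact card_union_add_card_inter _ _

lemma gg_submod (G : SimpleGraph V) [DecidableRel G.Adj] (f : V → ℕ) (A B : Finset V) :
    gg G f (A ∪ B) + gg G f (A ∩ B) ≤ gg G f A + gg G f B := by
  unfold gg
  rw [← Finset.sum_add_distrib, ← Finset.sum_add_distrib]
  refine Finset.sum_le_sum fun y _ => ?_
  have h1 := dd_union_inter G A B y
  have h2 := dd_mono G (Finset.inter_subset_left : A ∩ B ⊆ A) y
  have h3 := dd_mono G (Finset.inter_subset_right : A ∩ B ⊆ B) y
  omega

lemma gg_empty (G : SimpleGraph V) [DecidableRel G.Adj] (f : V → ℕ) : gg G f ∅ = 0 := by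
  simp [gg, dd]

lemma sum_biUnion_eq (G : SimpleGraph V) [DecidableRel G.Adj] (f : V → ℕ) (A : Finset V) :
    ∑ y ∈ A.biUnion (fun a => G.neighborFinset a),
      min (f y) ((A.filter fun x => G.Adj y x).card) = gg G f A := by
  refine Finset.sum_subset (Finset.subset_univ _) fun y _ hy => ?_
  have h : A.filter (fun x => G.Adj y x) = ∅ := by
    refine Finset.filter_eq_empty_iff.mpr fun x hx hadjx => ?_
    exact hy (Finset.mem_biUnion.mpr ⟨x, hx, (mem_neighborFinset G x y).mpr hadjx.symm⟩)
  simp [dd, h]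

lemma key (n : ℕ) : ∀ (G : SimpleGraph V) (X Y : Finset V) (f : V → ℕ)
    [DecidableRel G.Adj],
    (∀ v, v ∈ X ∨ v ∈ Y) → Disjoint X Y →
    (∀ ⦃u v⦄, G.Adj u v → (u ∈ X ∧ v ∈ Y) ∨ (u ∈ Y ∧ v ∈ X)) →
    (∑ x ∈ X, f x = ∑ y ∈ Y, f y) →
    (∀ A ⊆ X, ∑ x ∈ A, f x ≤ gg G f A) →
    ∑ x ∈ X, f x = n →
    ∃ H ≤ G, ∀ v, (H.neighborSet v).ncard = f v := by
  induction n using Nat.strong_induction_on with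
  | _ n IH =>
  intro G X Y f instG hcover hdisj hbip hsum hA hn
  by_cases h0 : ∀ x ∈ X, f x = 0
  · -- base case: f is identically zero
    have hY0 : ∀ y ∈ Y, f y = 0 := by
      have hz : ∑ y ∈ Y, f y = 0 := by rw [← hsum]; exact Finset.sum_eq_zero h0
      exact fun y hy => Finset.sum_eq_zero_iff.mp hz y hy
    have hf : ∀ v, f v = 0 := fun v => (hcover v).elim (h0 v) (hY0 v)
    refine ⟨⊥, bot_le, fun v => ?_⟩
    have : (⊥ : SimpleGraph V).neighborSet v = ∅ := by
      ext u; simp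
    rw [this, hf v, Set.ncard_empty]
  · push_neg at h0
    obtain ⟨x0, hx0X, hfx0⟩ := h0
    have hfx0' : 1 ≤ f x0 := Nat.one_le_iff_ne_zero.mpr hfx0
    have hXX : ∀ ⦃u v⦄, u ∈ X → v ∈ X → ¬ G.Adj u v := by
      intro u v hu hv h
      rcases hbip h with ⟨_, h2⟩ | ⟨h1, _⟩
      · exact Finset.disjoint_left.mp hdisj hv h2
      · exact Finset.disjoint_left.mp hdisj hu h1
    have hddX : ∀ (A : Finset V), A ⊆ X → ∀ y ∈ X, dd G A y = 0 := by
      intro A hAX y hy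
      rw [dd, Finset.card_eq_zero, Finset.filter_eq_empty_iff]
      exact fun x hx => hXX hy (hAX hx)
    -- the maximal tight set avoiding x0
    set TS := ((X.erase x0).powerset.filter (fun A => ∑ x ∈ A, f x = gg G f A)) with hTSdef
    set T := TS.sup id with hTdef
    have hTprop : T ⊆ X.erase x0 ∧ ∑ x ∈ T, f x = gg G f T := by
      refine Finset.sup_induction
        (p := fun (A : Finset V) => A ⊆ X.erase x0 ∧ ∑ x ∈ A, f x = gg G f A)
        ⟨Finset.empty_subset _, by simpa using (gg_empty G f).symm⟩ ?_ ?_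
      · rintro A ⟨hA1, hA2⟩ B ⟨hB1, hB2⟩
        rw [sup_eq_union]
        refine ⟨Finset.union_subset hA1 hB1, ?_⟩
        have h1 := hA (A ∪ B) ((Finset.union_subset hA1 hB1).trans (Finset.erase_subset _ _))
        have h2 := hA (A ∩ B)
          (((Finset.inter_subset_left : A ∩ B ⊆ A).trans hA1).trans (Finset.erase_subset _ _))
        have h3 := gg_submod G f A B
        have h4 : ∑ x ∈ A ∪ B, f x + ∑ x ∈ A ∩ B, f x = ∑ x ∈ A, f x + ∑ x ∈ B, f x :=
          Finset.sum_union_inter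
        omega
      · intro A hAmem
        simp only [hTSdef, Finset.mem_filter, Finset.mem_powerset] at hAmem
        exact ⟨hAmem.1, hAmem.2⟩
    have hTX : T ⊆ X := hTprop.1.trans (Finset.erase_subset _ _)
    have hx0T : x0 ∉ T := fun h => (Finset.mem_erase.mp (hTprop.1 h)).1 rfl
    have hTmax : ∀ A, A ⊆ X.erase x0 → ∑ x ∈ A, f x = gg G f A → A ⊆ T := by
      intro A h1 h2
      exact Finset.le_sup (f := id) (Finset.mem_filter.mpr ⟨Finset.mem_powerset.mpr h1, h2⟩)
    -- choose y0
    have hy0ex : ∃ y0, G.Adj x0 y0 ∧ dd G T y0 < f y0 := by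
      by_contra hno
      push_neg at hno
      have hdins : ∀ y, dd G (insert x0 T) y = (if G.Adj y x0 then 1 else 0) + dd G T y := by
        intro y
        unfold dd
        rw [Finset.filter_insert]
        by_cases hadj : G.Adj y x0
        · rw [if_pos hadj, if_pos hadj,
            Finset.card_insert_of_notMem (fun h => hx0T (Finset.mem_filter.mp h).1)]
          omega
        · rw [if_neg hadj, if_neg hadj, Nat.zero_add]
      have hgg : gg G f (insert x0 T) = gg G f T := by
        unfold gg
        refine Finset.sum_congr rfl fun y _ => ?_
        by_cases hadj : G.Adj y x0
        · have h1 := hno y hadj.symm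
          rw [hdins y, if_pos hadj]
          omega
        · rw [hdins y, if_neg hadj, Nat.zero_add]
      have hins := hA (insert x0 T) (Finset.insert_subset hx0X hTX)
      rw [Finset.sum_insert hx0T, hgg, ← hTprop.2] at hins
      omega
    obtain ⟨y0, hadj, hdT⟩ := hy0ex
    have hfy0' : 1 ≤ f y0 := by omega
    have hney : x0 ≠ y0 := G.ne_of_adj hadj
    have hy0Y : y0 ∈ Y := by
      rcases hbip hadj with ⟨_, h⟩ | ⟨h, _⟩
      · exact h
      · exact absurd h (Finset.disjoint_left.mp hdisj hx0X)
    have hy0X : y0 ∉ X := Finset.disjoint_right.mp hdisj hy0Y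
    have hx0Y : x0 ∉ Y := Finset.disjoint_left.mp hdisj hx0X
    -- modified data
    set f' : V → ℕ := fun v => if v = x0 ∨ v = y0 then f v - 1 else f v with hf'def
    set G' := G.deleteEdges {s(x0, y0)} with hG'def
    haveI instG' : DecidableRel G'.Adj := fun a b =>
      decidable_of_iff (G.Adj a b ∧ ¬ s(a, b) = s(x0, y0))
        (by rw [hG'def, deleteEdges_adj, Set.mem_singleton_iff])
    have hG'adj : ∀ {a b}, G'.Adj a b ↔ G.Adj a b ∧ ¬(a = x0 ∧ b = y0 ∨ a = y0 ∧ b = x0) := by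
      intro a b
      rw [hG'def, deleteEdges_adj, Set.mem_singleton_iff, Sym2.eq_iff]
    have hf'x0 : f' x0 = f x0 - 1 := if_pos (Or.inl rfl)
    have hf'y0 : f' y0 = f y0 - 1 := if_pos (Or.inr rfl)
    have hf'X : ∀ x ∈ X, x ≠ x0 → f' x = f x := by
      intro x hx hne
      refine if_neg ?_
      rintro (rfl | rfl)
      · exact hne rfl
      · exact hy0X hx
    have hf'Y : ∀ y ∈ Y, y ≠ y0 → f' y = f y := by
      intro y hy hne
      refine if_neg ?_
      rintro (rfl | rfl)
      · exact hx0Y hy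
      · exact hne rfl
    -- dd comparisons
    have hddA : ∀ (A : Finset V), A ⊆ X → x0 ∉ A → ∀ y, dd G' A y = dd G A y := by
      intro A hAX hx0A y
      unfold dd
      refine congrArg Finset.card (Finset.filter_congr fun x hx => ?_)
      rw [hG'adj]
      constructor
      · exact And.left
      · intro h
        refine ⟨h, ?_⟩
        rintro (⟨rfl, rfl⟩ | ⟨rfl, rfl⟩)
        · exact hy0X (hAX hx)
        · exact hx0A hx
    have hddB1 : ∀ (A : Finset V), A ⊆ X → ∀ y, y ≠ y0 → dd G' A y = dd G A y := by
      intro A hAX y hy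
      unfold dd
      refine congrArg Finset.card (Finset.filter_congr fun x hx => ?_)
      rw [hG'adj]
      constructor
      · exact And.left
      · intro h
        refine ⟨h, ?_⟩
        rintro (⟨rfl, rfl⟩ | ⟨rfl, rfl⟩)
        · exact hy0X (hAX hx)
        · exact hy rfl
    have hddB2 : ∀ (A : Finset V), x0 ∈ A → dd G' A y0 + 1 = dd G A y0 := by
      intro A hx0A
      unfold dd
      have he : A.filter (fun x => G'.Adj y0 x) = (A.filter fun x => G.Adj y0 x).erase x0 := by
        ext x
        simp only [Finset.mem_erase, Finset.mem_filter]
        rw [hG'adj]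
        constructor
        · rintro ⟨hxA, hGA, hno2⟩
          exact ⟨fun h => hno2 (Or.inr ⟨rfl, h⟩), hxA, hGA⟩
        · rintro ⟨hne, hxA, hGA⟩
          refine ⟨hxA, hGA, ?_⟩
          rintro (⟨h1, _⟩ | ⟨_, h2⟩)
          · exact hney h1.symm
          · exact hne h2
      have hx0f : x0 ∈ A.filter fun x => G.Adj y0 x :=
        Finset.mem_filter.mpr ⟨hx0A, hadj.symm⟩
      rw [he, Finset.card_erase_of_mem hx0f]
      have : 1 ≤ (A.filter fun x => G.Adj y0 x).card := Finset.card_pos.mpr ⟨x0, hx0f⟩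
      omega
    -- termwise bounds
    have hterm1 : ∀ (A : Finset V), A ⊆ X → ∀ y,
        min (f y) (dd G A y) ≤ min (f' y) (dd G' A y) + (if y = y0 then 1 else 0) := by
      intro A hAX y
      by_cases hy : y0 = y
      · subst hy
        rw [if_pos rfl, hf'y0]
        by_cases hx0A : x0 ∈ A
        · have h := hddB2 A hx0A; omega
        · rw [hddA A hAX hx0A]; omega
      · rw [if_neg (fun h => hy h.symm)]
        by_cases hyx0 : y = x0
        · subst hyx0
          simp [hddX A hAX _ hx0X]
        · have hfy : f' y = f y := by
            refine if_neg ?_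
            rintro (rfl | rfl)
            · exact hyx0 rfl
            · exact hy rfl
          rw [hfy, hddB1 A hAX y (fun h => hy h.symm)]
          omega
    have hsum1 : ∀ (A : Finset V), A ⊆ X → gg G f A ≤ gg G' f' A + 1 := by
      intro A hAX
      calc gg G f A = ∑ y, min (f y) (dd G A y) := rfl
        _ ≤ ∑ y, (min (f' y) (dd G' A y) + if y = y0 then 1 else 0) :=
            Finset.sum_le_sum fun y _ => hterm1 A hAX y
        _ = gg G' f' A + 1 := by
            rw [Finset.sum_add_distrib]
            congr 1
            simp
    have hsum2 : ∀ (A : Finset V), A ⊆ X → x0 ∉ A → A ⊆ T → gg G f A ≤ gg G' f' A := by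
      intro A hAX hx0A hAT
      unfold gg
      refine Finset.sum_le_sum fun y _ => ?_
      rw [hddA A hAX hx0A y]
      by_cases hy : y0 = y
      · subst hy
        rw [hf'y0]
        have h1 : dd G A y0 ≤ dd G T y0 := dd_mono G hAT y0
        omega
      · by_cases hyx0 : y = x0
        · subst hyx0
          simp [hddX A hAX _ hx0X]
        · have hfy : f' y = f y := by
            refine if_neg ?_
            rintro (rfl | rfl)
            · exact hyx0 rfl
            · exact hy rfl
          rw [hfy]
    -- sums of f' over subsets of X containing x0
    have hsumX' : ∀ (A : Finset V), A ⊆ X → x0 ∈ A → ∑ x ∈ A, f' x + 1 = ∑ x ∈ A, f x := by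
      intro A hAX hx0A
      rw [← Finset.add_sum_erase A f hx0A, ← Finset.add_sum_erase A f' hx0A]
      have he : ∑ x ∈ A.erase x0, f' x = ∑ x ∈ A.erase x0, f x :=
        Finset.sum_congr rfl fun x hx =>
          hf'X x (hAX (Finset.mem_of_mem_erase hx)) (Finset.ne_of_mem_erase hx)
      rw [he, hf'x0]
      omega
    have hsumY' : ∑ y ∈ Y, f' y + 1 = ∑ y ∈ Y, f y := by
      rw [← Finset.add_sum_erase Y f hy0Y, ← Finset.add_sum_erase Y f' hy0Y]
      have he : ∑ y ∈ Y.erase y0, f' y = ∑ y ∈ Y.erase y0, f y :=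
        Finset.sum_congr rfl fun y hy =>
          hf'Y y (Finset.mem_of_mem_erase hy) (Finset.ne_of_mem_erase hy)
      rw [he, hf'y0]
      omega
    have hA' : ∀ A ⊆ X, ∑ x ∈ A, f' x ≤ gg G' f' A := by
      intro A hAX
      by_cases hx0A : x0 ∈ A
      · have h1 := hsumX' A hAX hx0A
        have h2 := hA A hAX
        have h3 := hsum1 A hAX
        omega
      · have hsA : ∑ x ∈ A, f' x = ∑ x ∈ A, f x :=
          Finset.sum_congr rfl fun x hx => hf'X x (hAX hx) (fun h => hx0A (h ▸ hx))
        by_cases htight : ∑ x ∈ A, f x = gg G f A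
        · have hAT : A ⊆ T := hTmax A
            (fun x hx => Finset.mem_erase.mpr ⟨fun h => hx0A (h ▸ hx), hAX hx⟩) htight
          have h2 := hsum2 A hAX hx0A hAT
          omega
        · have h1 := hA A hAX
          have h2 := hsum1 A hAX
          omega
    have hsXf : ∑ x ∈ X, f' x + 1 = ∑ x ∈ X, f x := hsumX' X Finset.Subset.rfl hx0X
    have hsum' : ∑ x ∈ X, f' x = ∑ y ∈ Y, f' y := by omega
    have hbip' : ∀ ⦃u v⦄, G'.Adj u v → (u ∈ X ∧ v ∈ Y) ∨ (u ∈ Y ∧ v ∈ X) :=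
      fun u v h => hbip (hG'adj.mp h).1
    have hfle : f x0 ≤ ∑ x ∈ X, f x := Finset.single_le_sum (fun i _ => Nat.zero_le _) hx0X
    have hm : ∑ x ∈ X, f' x < n := by omega
    obtain ⟨H', hH'le, hH'deg⟩ :=
      IH (∑ x ∈ X, f' x) hm G' X Y f' hcover hdisj hbip' hsum' hA' rfl
    -- add back the edge x0-y0
    have hEle : edge x0 y0 ≤ G := by
      intro a b hab
      rw [edge_adj] at hab
      rcases hab.1 with ⟨rfl, rfl⟩ | ⟨rfl, rfl⟩
      · exact hadj
      · exact hadj.symm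
    refine ⟨H' ⊔ edge x0 y0, sup_le (hH'le.trans (by rw [hG'def]; exact deleteEdges_le _)) hEle,
      fun v => ?_⟩
    have hnb : (H' ⊔ edge x0 y0).neighborSet v
        = H'.neighborSet v ∪ (edge x0 y0).neighborSet v := by
      ext u
      simp [mem_neighborSet, sup_adj, Set.mem_union]
    by_cases hvx : x0 = v
    · subst hvx
      have hE1 : (edge x0 y0).neighborSet x0 = {y0} := by
        ext u
        rw [mem_neighborSet, edge_adj, Set.mem_singleton_iff]
        constructor
        · rintro ⟨⟨_, rfl⟩ | ⟨h1, _⟩, _⟩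
          · rfl
          · exact absurd h1 hney
        · rintro rfl
          exact ⟨Or.inl ⟨rfl, rfl⟩, hney⟩
      have hdisj2 : y0 ∉ H'.neighborSet x0 := by
        intro h
        have h2 : G'.Adj x0 y0 := hH'le h
        exact (hG'adj.mp h2).2 (Or.inl ⟨rfl, rfl⟩)
      rw [hnb, hE1,
        Set.ncard_union_eq (Set.disjoint_singleton_right.mpr hdisj2) (Set.toFinite _)
          (Set.toFinite _),
        Set.ncard_singleton, hH'deg x0, hf'x0]
      omega
    · by_cases hvy : y0 = v
      · subst hvy
        have hE2 : (edge x0 y0).neighborSet y0 = {x0} := by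
          ext u
          rw [mem_neighborSet, edge_adj, Set.mem_singleton_iff]
          constructor
          · rintro ⟨⟨h1, _⟩ | ⟨_, rfl⟩, _⟩
            · exact absurd h1.symm hney
            · rfl
          · rintro rfl
            exact ⟨Or.inr ⟨rfl, rfl⟩, hney.symm⟩
        have hdisj2 : x0 ∉ H'.neighborSet y0 := by
          intro h
          have h2 : G'.Adj y0 x0 := hH'le h
          exact (hG'adj.mp h2).2 (Or.inr ⟨rfl, rfl⟩)
        rw [hnb, hE2,
          Set.ncard_union_eq (Set.disjoint_singleton_right.mpr hdisj2) (Set.toFinite _)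
            (Set.toFinite _),
          Set.ncard_singleton, hH'deg y0, hf'y0]
        omega
      · have hE0 : (edge x0 y0).neighborSet v = ∅ := by
          ext u
          rw [mem_neighborSet, edge_adj]
          simp only [Set.mem_empty_iff_false, iff_false]
          rintro ⟨⟨rfl, _⟩ | ⟨rfl, _⟩, _⟩
          · exact hvx rfl
          · exact hvy rfl
        have hfv : f' v = f v := by
          refine if_neg ?_
          rintro (rfl | rfl)
          · exact hvx rfl
          · exact hvy rfl
        rw [hnb, hE0, Set.union_empty, hH'deg v, hfv]

end OreRyserAux
open OreRyserAux
end OreRyserAuxSec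

open OreRyserAux

/-- `S_{k,l}`: two stars `K_{1,k}` and `K_{1,l}` with centers `0` and `1` joined by an edge.
Leaves of `0` are `2..k+1`; leaves of `1` are `k+2..k+l+1`. -/
def starStar (k l : ℕ) : SimpleGraph (Fin (k + l + 2)) :=
  SimpleGraph.fromRel fun a b =>
    ((a : ℕ) = 0 ∧ (b : ℕ) = 1) ∨
    ((a : ℕ) = 0 ∧ 2 ≤ (b : ℕ) ∧ (b : ℕ) ≤ k + 1) ∨
    ((a : ℕ) = 1 ∧ k + 2 ≤ (b : ℕ))

/-- `G` contains no induced subgraph isomorphic to `S_{k,l}`. -/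
def SFree (k l : ℕ) {V : Type*} (G : SimpleGraph V) : Prop :=
  ¬ ∃ f : Fin (k + l + 2) ↪ V, ∀ a b, G.Adj (f a) (f b) ↔ (starStar k l).Adj a b

/-- `(X, Y)` is a bipartition of the graph `G`. -/
def IsBipartition {V : Type*} (G : SimpleGraph V) (X Y : Set V) : Prop :=
  (∀ v, v ∈ X ∨ v ∈ Y) ∧ Disjoint X Y ∧
    ∀ ⦃u v⦄, G.Adj u v → (u ∈ X ∧ v ∈ Y) ∨ (u ∈ Y ∧ v ∈ X)

/-- **Ore–Ryser theorem.** A bipartite graph `G = (X, Y; E)` has an `f`-factor iff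
`∑_{x ∈ X} f(x) = ∑_{y ∈ Y} f(y)` and for every `A ⊆ X`,
`∑_{x ∈ A} f(x) ≤ ∑_{y ∈ N(A)} min (f y) (d_A y)`. -/
theorem stmt0 {V : Type*} [Fintype V] [DecidableEq V] (G : SimpleGraph V) [DecidableRel G.Adj]
    (X Y : Finset V) (hcover : ∀ v, v ∈ X ∨ v ∈ Y) (hdisj : Disjoint X Y)
    (hbip : ∀ ⦃u v⦄, G.Adj u v → (u ∈ X ∧ v ∈ Y) ∨ (u ∈ Y ∧ v ∈ X))
    (f : V → ℕ) :
    (∃ H ≤ G, ∀ v, (H.neighborSet v).ncard = f v) ↔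
      (∑ x ∈ X, f x = ∑ y ∈ Y, f y) ∧
        ∀ A ⊆ X, ∑ x ∈ A, f x ≤
          ∑ y ∈ A.biUnion (fun a => G.neighborFinset a),
            min (f y) ((A.filter fun x => G.Adj y x).card) := by
  constructor
  · rintro ⟨H, hHG, hdeg⟩
    classical
    haveI : DecidableRel H.Adj := Classical.decRel _
    have hdeg' : ∀ v, (H.neighborFinset v).card = f v := by
      intro v
      rw [← hdeg v, neighborFinset_def]
      exact (Set.ncard_eq_toFinset_card' _).symm
    have hmemY : ∀ ⦃x y⦄, x ∈ X → H.Adj x y → y ∈ Y := by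
      intro x y hx h
      rcases hbip (hHG h) with ⟨_, h2⟩ | ⟨h1, _⟩
      · exact h2
      · exact absurd h1 (Finset.disjoint_left.mp hdisj hx)
    have hmemX : ∀ ⦃y x⦄, y ∈ Y → H.Adj y x → x ∈ X := by
      intro y x hy h
      rcases hbip (hHG h) with ⟨h1, _⟩ | ⟨_, h2⟩
      · exact absurd h1 (Finset.disjoint_right.mp hdisj hy)
      · exact h2
    constructor
    · have hXf : ∀ x ∈ X, f x = ∑ y ∈ Y, if H.Adj x y then 1 else 0 := by
        intro x hx
        rw [← hdeg' x]
        have he : H.neighborFinset x = Y.filter (fun y => H.Adj x y) := by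
          ext y
          simp only [mem_neighborFinset, Finset.mem_filter]
          exact ⟨fun h => ⟨hmemY hx h, h⟩, And.right⟩
        rw [he, Finset.card_filter]
      have hYf : ∀ y ∈ Y, f y = ∑ x ∈ X, if H.Adj y x then 1 else 0 := by
        intro y hy
        rw [← hdeg' y]
        have he : H.neighborFinset y = X.filter (fun x => H.Adj y x) := by
          ext x
          simp only [mem_neighborFinset, Finset.mem_filter]
          exact ⟨fun h => ⟨hmemX hy h, h⟩, And.right⟩
        rw [he, Finset.card_filter]
      have hflip : ∀ x y : V, (if H.Adj x y then 1 else 0) = (if H.Adj y x then (1:ℕ) else 0) := by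
        intro x y
        by_cases h : H.Adj x y
        · rw [if_pos h, if_pos h.symm]
        · rw [if_neg h, if_neg (fun h' => h h'.symm)]
      calc ∑ x ∈ X, f x
          = ∑ x ∈ X, ∑ y ∈ Y, (if H.Adj x y then 1 else 0) := Finset.sum_congr rfl hXf
        _ = ∑ y ∈ Y, ∑ x ∈ X, (if H.Adj x y then 1 else 0) := Finset.sum_comm
        _ = ∑ y ∈ Y, ∑ x ∈ X, (if H.Adj y x then 1 else 0) := by
            refine Finset.sum_congr rfl fun y _ => Finset.sum_congr rfl fun x _ => hflip x y
        _ = ∑ y ∈ Y, f y := (Finset.sum_congr rfl hYf).symm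
    · intro A hAX
      rw [sum_biUnion_eq]
      have hstep : ∀ x ∈ A, f x = ∑ y : V, if H.Adj x y then 1 else 0 := by
        intro x _
        rw [← hdeg' x]
        have he : H.neighborFinset x = Finset.univ.filter (fun y => H.Adj x y) := by
          ext y
          simp [mem_neighborFinset]
        rw [he, Finset.card_filter]
      calc ∑ x ∈ A, f x
          = ∑ x ∈ A, ∑ y : V, (if H.Adj x y then 1 else 0) := Finset.sum_congr rfl hstep
        _ = ∑ y : V, ∑ x ∈ A, (if H.Adj x y then 1 else 0) := Finset.sum_comm
        _ ≤ ∑ y : V, min (f y) (dd G A y) := ?_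
        _ = gg G f A := rfl
      refine Finset.sum_le_sum fun y _ => ?_
      rw [← Finset.card_filter]
      refine le_min ?_ ?_
      · rw [← hdeg' y]
        refine Finset.card_le_card fun x hx => ?_
        rw [mem_neighborFinset]
        exact (Finset.mem_filter.mp hx).2.symm
      · refine Finset.card_le_card fun x hx => ?_
        obtain ⟨hxA, hadj⟩ := Finset.mem_filter.mp hx
        exact Finset.mem_filter.mpr ⟨hxA, (hHG hadj).symm⟩
  · rintro ⟨hsum, hA⟩
    refine key (∑ x ∈ X, f x) G X Y f hcover hdisj hbip hsum ?_ rfl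
    intro A hAX
    rw [← sum_biUnion_eq]
    exact hA A hAX
end

section
/- If G is a connected S_{1,2}-free bipartite graph that is not a path, not an even cycle, and not obtainable from a complete bipartite graph by removing a matching, and u₁u₂u₃u₄ is an induced path in G, then at least one of the vertices u₁, u₂, u₃, u₄ has degree different from 2. -/
open SimpleGraph

/-- `G` is a path graph. -/
def IsPathGraph {V : Type*} (G : SimpleGraph V) : Prop :=
  ∃ n : ℕ, Nonempty (G ≃g pathGraph n)

/-- `G` is a cycle of length `n`. -/
def IsCycleGraph {V : Type*} (G : SimpleGraph V) (n : ℕ) : Prop :=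
  3 ≤ n ∧ Nonempty (G ≃g cycleGraph n)

/-- `G` is obtained from a complete bipartite graph by removing the edges of a matching,
the matching being encoded by an involution `m` (vertices with `m v = v` are unmatched). -/
def IsCompleteBipartiteMinusMatching {V : Type*} (G : SimpleGraph V) : Prop :=
  ∃ (X Y : Set V) (m : V → V),
    (∀ v, v ∈ X ∨ v ∈ Y) ∧ Disjoint X Y ∧ (∀ v, m (m v) = v) ∧
    ∀ u v, G.Adj u v ↔ ((u ∈ X ∧ v ∈ Y) ∨ (u ∈ Y ∧ v ∈ X)) ∧ m u ≠ v

/-!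
Bipartite graphs are triangle-free, and in a triangle-free `S_{1,2}`-free graph an induced path
`a b c d` of degree-two vertices propagates: a further neighbour `z` of `d` has at most one
neighbour other than `d`, since two of them together with `z`, `d`, `c` would span an `S_{1,2}`.
So `z` has degree one, or `b c d z` is again such a path. By connectedness every vertex then has
degree at most two, hence `G` is a path or a cycle, and bipartiteness makes the cycle even.
-/

section

variable {V : Type*} {G : SimpleGraph V}

theorem SimpleGraph.CliqueFree.not_adj_of_adj_of_adj (h : G.CliqueFree 3) {u v w : V}
    (huv : G.Adj u v) (huw : G.Adj u w) : ¬ G.Adj v w := by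
  classical
  exact fun hvw => h {u, v, w} (is3Clique_triple_iff.mpr ⟨huv, huw, hvw⟩)

theorem SimpleGraph.Preconnected.mem_of_forall_adj (hG : G.Preconnected) {S : Set V}
    (hS : ∀ ⦃v w⦄, v ∈ S → G.Adj v w → w ∈ S) {u : V} (hu : u ∈ S) (v : V) : v ∈ S := by
  by_contra hv
  obtain ⟨d, -, hd, hd'⟩ := (hG u v).some.exists_boundary_dart S hu hv
  exact hd' (hS hd d.adj)

theorem SimpleGraph.neighborSet_eq_pair_of_ncard_eq_two {u v w : V}
    (h : (G.neighborSet u).ncard = 2) (hv : G.Adj u v) (hw : G.Adj u w) (hvw : v ≠ w) :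
    G.neighborSet u = {v, w} := by
  refine (Set.eq_of_subset_of_ncard_le ?_ ?_ (Set.finite_of_ncard_pos (by omega))).symm
  · rintro z (rfl | rfl) <;> assumption
  · rw [h, Set.ncard_pair hvw]

theorem SFree.adj_or_adj_of_cliqueFree (hfree : SFree 1 2 G) (htri : G.CliqueFree 3)
    {u v x y y' : V} (huv : G.Adj u v) (hux : G.Adj u x) (hvy : G.Adj v y)
    (hvy' : G.Adj v y') (hyy' : y ≠ y') : G.Adj x y ∨ G.Adj x y' := by
  by_contra! ⟨hxy, hxy'⟩
  have huy := htri.not_adj_of_adj_of_adj huv.symm hvy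
  have huy' := htri.not_adj_of_adj_of_adj huv.symm hvy'
  have hvx := htri.not_adj_of_adj_of_adj huv hux
  have hyy'' := htri.not_adj_of_adj_of_adj hvy hvy'
  have hf : ∀ i j,
      G.Adj (![u, v, x, y, y'] i) (![u, v, x, y, y'] j) ↔ (starStar 1 2).Adj i j := by
    intro i j
    fin_cases i <;> fin_cases j <;> simp [starStar, *, G.adj_comm]
  refine hfree ⟨⟨![u, v, x, y, y'], fun i j hij => ?_⟩, hf⟩
  fin_cases i <;> fin_cases j <;> simp at hij ⊢ <;> subst hij <;> simp_all [G.adj_comm]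

theorem SFree.subsingleton_neighborSet_sdiff (hfree : SFree 1 2 G) (htri : G.CliqueFree 3)
    {b c d z : V} (hc : G.neighborSet c = {b, d}) (hdz : G.Adj d z) (hbz : ¬ G.Adj b z) :
    (G.neighborSet z \ {d}).Subsingleton := by
  have hdc : G.Adj d c := (show d ∈ G.neighborSet c by simp [hc]).symm
  have hcw : ∀ {w}, w ∈ G.neighborSet z \ {d} → ¬ G.Adj c w := by
    rintro w ⟨hzw, hwd⟩ hcw
    have hw : w ∈ G.neighborSet c := hcw
    rw [hc] at hw
    rcases hw with rfl | rfl
    · exact hbz hzw.symm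
    · exact hwd rfl
  intro w hw w' hw'
  by_contra hww'
  rcases hfree.adj_or_adj_of_cliqueFree htri hdz hdc hw.1 hw'.1 hww' with h | h
  · exact hcw hw h
  · exact hcw hw' h

/-- In a triangle-free graph these conditions say that `a b c d` is an induced path. -/
structure IsInducedDegreeTwoPath (G : SimpleGraph V) (a b c d : V) : Prop where
  adj_ab : G.Adj a b
  adj_bc : G.Adj b c
  adj_cd : G.Adj c d
  ne_ac : a ≠ c
  ne_bd : b ≠ d
  not_adj_ad : ¬ G.Adj a d
  ncard_a : (G.neighborSet a).ncard = 2
  ncard_b : (G.neighborSet b).ncard = 2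
  ncard_c : (G.neighborSet c).ncard = 2
  ncard_d : (G.neighborSet d).ncard = 2

namespace IsInducedDegreeTwoPath

variable {a b c d : V}

theorem reverse (h : IsInducedDegreeTwoPath G a b c d) : IsInducedDegreeTwoPath G d c b a :=
  ⟨h.adj_cd.symm, h.adj_bc.symm, h.adj_ab.symm, h.ne_bd.symm, h.ne_ac.symm,
    fun had => h.not_adj_ad had.symm, h.ncard_d, h.ncard_c, h.ncard_b, h.ncard_a⟩

theorem neighborSet_b (h : IsInducedDegreeTwoPath G a b c d) : G.neighborSet b = {a, c} :=
  neighborSet_eq_pair_of_ncard_eq_two h.ncard_b h.adj_ab.symm h.adj_bc h.ne_ac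

theorem neighborSet_c (h : IsInducedDegreeTwoPath G a b c d) : G.neighborSet c = {b, d} := by
  rw [Set.pair_comm]; exact h.reverse.neighborSet_b

theorem ncard_eq_one_or_extend (hfree : SFree 1 2 G) (htri : G.CliqueFree 3)
    (h : IsInducedDegreeTwoPath G a b c d) {z : V} (hdz : G.Adj d z) (hzc : z ≠ c) :
    (G.neighborSet z).ncard = 1 ∨ IsInducedDegreeTwoPath G b c d z := by
  have hbz : ¬ G.Adj b z := fun hbz => by
    have : z ∈ G.neighborSet b := hbz
    rw [h.neighborSet_b] at this
    rcases this with rfl | rfl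
    · exact h.not_adj_ad hdz.symm
    · exact hzc rfl
  have hN : insert d (G.neighborSet z \ {d}) = G.neighborSet z := by
    rw [Set.insert_sdiff_singleton]; exact Set.insert_eq_of_mem hdz.symm
  rcases (hfree.subsingleton_neighborSet_sdiff htri h.neighborSet_c hdz hbz).eq_empty_or_singleton
    with h0 | ⟨w, hw⟩
  · left
    rw [← hN, h0, insert_empty_eq, Set.ncard_singleton]
  · right
    obtain ⟨-, hwd⟩ : w ∈ G.neighborSet z \ {d} := hw ▸ Set.mem_singleton w
    exact ⟨h.adj_bc, h.adj_cd, hdz, h.ne_bd, hzc.symm, hbz, h.ncard_b, h.ncard_c, h.ncard_d,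
      by rw [← hN, hw, Set.ncard_pair (Ne.symm hwd)]⟩

theorem ncard_of_mem (h : IsInducedDegreeTwoPath G a b c d) {v : V}
    (hv : v ∈ ({a, b, c, d} : Set V)) : (G.neighborSet v).ncard = 2 := by
  rcases hv with rfl | rfl | rfl | rfl
  exacts [h.ncard_a, h.ncard_b, h.ncard_c, h.ncard_d]

theorem ncard_eq_one_or_mem_of_adj (hfree : SFree 1 2 G) (htri : G.CliqueFree 3)
    (h : IsInducedDegreeTwoPath G a b c d) {v w : V} (hv : v ∈ ({a, b, c, d} : Set V))
    (hvw : G.Adj v w) :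
    (G.neighborSet w).ncard = 1 ∨
      ∃ a' b' c' d', IsInducedDegreeTwoPath G a' b' c' d' ∧ w ∈ ({a', b', c', d'} : Set V) := by
  rcases hv with rfl | rfl | rfl | rfl
  · by_cases hwb : w = b
    · exact .inr ⟨v, b, c, d, h, by simp [hwb]⟩
    · exact (h.reverse.ncard_eq_one_or_extend hfree htri hvw hwb).imp_right
        fun h' => ⟨c, b, v, w, h', by simp⟩
  · have hw : w ∈ G.neighborSet v := hvw
    rw [h.neighborSet_b] at hw
    exact .inr ⟨a, v, c, d, h, by rcases hw with rfl | rfl <;> simp⟩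
  · have hw : w ∈ G.neighborSet v := hvw
    rw [h.neighborSet_c] at hw
    exact .inr ⟨a, b, v, d, h, by rcases hw with rfl | rfl <;> simp⟩
  · by_cases hwc : w = c
    · exact .inr ⟨a, b, c, v, h, by simp [hwc]⟩
    · exact (h.ncard_eq_one_or_extend hfree htri hvw hwc).imp_right
        fun h' => ⟨b, c, v, w, h', by simp⟩

end IsInducedDegreeTwoPath

theorem IsInducedDegreeTwoPath.ncard_neighborSet_le_two (hfree : SFree 1 2 G)
    (htri : G.CliqueFree 3) (hconn : G.Preconnected) {a b c d : V}
    (h : IsInducedDegreeTwoPath G a b c d) (v : V) : (G.neighborSet v).ncard ≤ 2 := by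
  let S : Set V := {v | ∃ a b c d, IsInducedDegreeTwoPath G a b c d ∧
    ∃ x ∈ ({a, b, c, d} : Set V), x = v ∨ G.Adj x v}
  have hS : ∀ v ∈ S, (G.neighborSet v).ncard ≤ 2 := by
    rintro v ⟨a, b, c, d, h, x, hx, rfl | hxv⟩
    · exact (h.ncard_of_mem hx).le
    · rcases h.ncard_eq_one_or_mem_of_adj hfree htri hx hxv with h1 | ⟨_, _, _, _, h', hv⟩
      · omega
      · exact (h'.ncard_of_mem hv).le
  refine hS v (hconn.mem_of_forall_adj (S := S) ?_ ⟨a, b, c, d, h, a, by simp, .inl rfl⟩ v)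
  -- a degree-one vertex of `S` can only lead back to the path it hangs from
  rintro v w ⟨a, b, c, d, h, x, hx, rfl | hxv⟩ hvw
  · exact ⟨a, b, c, d, h, x, hx, .inr hvw⟩
  rcases h.ncard_eq_one_or_mem_of_adj hfree htri hx hxv with h1 | ⟨_, _, _, _, h', hv⟩
  · obtain ⟨y, hy⟩ := Set.ncard_eq_one.mp h1
    have hxy : x ∈ G.neighborSet v := hxv.symm
    have hwy : w ∈ G.neighborSet v := hvw
    rw [hy] at hxy hwy
    exact ⟨a, b, c, d, h, x, hx, .inl (hxy.trans hwy.symm)⟩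
  · exact ⟨_, _, _, _, h', v, hv, .inr hvw⟩

theorem SimpleGraph.exists_path_forall_length_le [Finite V] [Nonempty V] :
    ∃ (a b : V) (p : G.Path a b), ∀ (c d : V) (q : G.Path c d), q.1.length ≤ p.1.length := by
  classical
  have := Fintype.ofFinite V
  obtain ⟨v⟩ := ‹Nonempty V›
  have : Nonempty (Σ a b : V, G.Path a b) := ⟨⟨v, v, Path.nil⟩⟩
  obtain ⟨⟨a, b, p⟩, hp⟩ := Finite.exists_max fun q : Σ a b : V, G.Path a b => q.2.2.1.length
  exact ⟨a, b, p, fun c d q => hp ⟨c, d, q⟩⟩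

namespace SimpleGraph.Walk.IsPath

variable {a b : V} {p : G.Walk a b}

theorem mem_support_of_adj_start (hp : p.IsPath)
    (hmax : ∀ (c d : V) (q : G.Path c d), q.1.length ≤ p.length) {w : V} (hw : G.Adj a w) :
    w ∈ p.support := by
  by_contra hws
  have := hmax w b ⟨cons hw.symm p, hp.cons hws⟩
  simp at this

theorem neighborSet_getVert [Finite V] (hp : p.IsPath) {i : ℕ} (hi0 : i ≠ 0) (hi : i < p.length)
    (hdeg : (G.neighborSet (p.getVert i)).ncard ≤ 2) :
    G.neighborSet (p.getVert i) = {p.getVert (i - 1), p.getVert (i + 1)} := by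
  rw [← hp.neighborSet_toSubgraph_internal hi0 hi]
  refine (Set.eq_of_subset_of_ncard_le (p.toSubgraph.neighborSet_subset _) ?_
    (Set.toFinite _)).symm
  rwa [hp.ncard_neighborSet_toSubgraph_internal_eq_two hi0 hi]

theorem eq_add_one_of_adj_getVert [Finite V] (hp : p.IsPath)
    (hdeg : ∀ v, (G.neighborSet v).ncard ≤ 2) {i j : ℕ} (hij : i < j) (hj : j ≤ p.length)
    (h : G.Adj (p.getVert i) (p.getVert j)) : j = i + 1 ∨ (i = 0 ∧ j = p.length) := by
  have inj : ∀ {k l}, k ≤ p.length → l ≤ p.length → p.getVert k = p.getVert l → k = l :=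
    fun hk hl hkl => hp.getVert_injOn hk hl hkl
  rcases Nat.eq_zero_or_pos i with rfl | hi0
  · rcases hj.eq_or_lt with rfl | hjn
    · exact .inr ⟨rfl, rfl⟩
    · have : p.getVert 0 ∈ G.neighborSet (p.getVert j) := h.symm
      rw [hp.neighborSet_getVert (by omega) hjn (hdeg _)] at this
      rcases this with h' | h' <;> have := inj (by omega) (by omega) h' <;> omega
  · have : p.getVert j ∈ G.neighborSet (p.getVert i) := h
    rw [hp.neighborSet_getVert (by omega) (by omega) (hdeg _)] at this
    rcases this with h' | h' <;> have := inj hj (by omega) h' <;> omega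

theorem mem_support_of_preconnected [Finite V] (hp : p.IsPath)
    (hmax : ∀ (c d : V) (q : G.Path c d), q.1.length ≤ p.length)
    (hdeg : ∀ v, (G.neighborSet v).ncard ≤ 2) (hconn : G.Preconnected) (v : V) :
    v ∈ p.support := by
  refine hconn.mem_of_forall_adj (S := {v | v ∈ p.support}) ?_ p.start_mem_support v
  intro v w hv hvw
  obtain ⟨i, rfl, hi⟩ := mem_support_iff_exists_getVert.mp hv
  rcases Nat.eq_zero_or_pos i with rfl | hi0
  · exact hp.mem_support_of_adj_start hmax (by simpa using hvw)
  rcases hi.eq_or_lt with rfl | hin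
  · simpa using hp.reverse.mem_support_of_adj_start (by simpa using hmax) (by simpa using hvw)
  · have : w ∈ G.neighborSet (p.getVert i) := hvw
    rw [hp.neighborSet_getVert hi0.ne' hin (hdeg _)] at this
    rcases this with rfl | rfl <;> exact p.getVert_mem_support _

end SimpleGraph.Walk.IsPath

theorem SimpleGraph.cycleGraph_adj_iff_val {n : ℕ} (hn : 1 ≤ n) {i j : Fin (n + 1)} :
    (cycleGraph (n + 1)).Adj i j ↔ i.val + 1 = j.val ∨ j.val + 1 = i.val ∨
      (i.val = 0 ∧ j.val = n) ∨ (i.val = n ∧ j.val = 0) := by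
  rw [cycleGraph_adj']
  rcases lt_trichotomy i j with h | rfl | h
  · rw [Fin.coe_sub_iff_lt.mpr h, Fin.coe_sub_iff_le.mpr h.le]
    have : i.val < j.val := h
    omega
  · simp only [sub_self, Fin.val_zero]
    omega
  · rw [Fin.coe_sub_iff_lt.mpr h, Fin.coe_sub_iff_le.mpr h.le]
    have : j.val < i.val := h
    omega

theorem SimpleGraph.Connected.isPathGraph_or_isCycleGraph [Fintype V] (hconn : G.Connected)
    (hdeg : ∀ v, (G.neighborSet v).ncard ≤ 2) :
    IsPathGraph G ∨ IsCycleGraph G (Fintype.card V) := by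
  -- a longest path covers `V`, and its inner vertices have no neighbours off it
  have := hconn.nonempty
  obtain ⟨a, b, ⟨p, hp⟩, hmax⟩ := exists_path_forall_length_le (G := G)
  set n := p.length
  let f : Fin (n + 1) → V := fun i => p.getVert i
  have hf : f.Bijective := by
    refine ⟨fun i j hij => Fin.ext (hp.getVert_injOn (by grind) (by grind) hij), fun v => ?_⟩
    obtain ⟨i, rfl, hi⟩ :=
      Walk.mem_support_iff_exists_getVert.mp (hp.mem_support_of_preconnected hmax hdeg hconn.1 v)
    exact ⟨⟨i, by omega⟩, rfl⟩
  have hcard : Fintype.card V = n + 1 := by simpa using (Fintype.card_of_bijective hf).symm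
  have hstart {i : Fin (n + 1)} (hi : i.val = 0) : f i = a := by simp [f, hi]
  have hend {i : Fin (n + 1)} (hi : i.val = n) : f i = b := by simp [f, hi, n]
  have hsucc {i j : Fin (n + 1)} (hij : i.val + 1 = j.val) : G.Adj (f i) (f j) := by
    simpa [f, ← hij] using p.adj_getVert_succ (i := i) (by omega)
  have hadj {i j : Fin (n + 1)} (h : G.Adj (f i) (f j)) :
      i.val + 1 = j ∨ j.val + 1 = i ∨ (i.val = 0 ∧ j.val = n) ∨ (i.val = n ∧ j.val = 0) := by
    rcases lt_trichotomy i.val j.val with hij | hij | hij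
    · have := hp.eq_add_one_of_adj_getVert hdeg hij (by omega) h
      omega
    · exact absurd h (Fin.ext hij ▸ G.irrefl)
    · have := hp.eq_add_one_of_adj_getVert hdeg hij (by omega) h.symm
      omega
  by_cases hcyc : G.Adj a b ∧ 2 ≤ n
  · refine .inr ⟨by omega, ?_⟩
    rw [hcard]
    refine ⟨(RelIso.mk (Equiv.ofBijective f hf) fun {i j} => ?_ :
      cycleGraph (n + 1) ≃g G).symm⟩
    rw [Equiv.ofBijective_apply, Equiv.ofBijective_apply, cycleGraph_adj_iff_val (by omega)]
    refine ⟨hadj, ?_⟩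
    rintro (h | h | ⟨hi, hj⟩ | ⟨hi, hj⟩)
    · exact hsucc h
    · exact (hsucc h).symm
    · rw [hstart hi, hend hj]; exact hcyc.1
    · rw [hstart hj, hend hi]; exact hcyc.1.symm
  · refine .inl ⟨n + 1, ⟨(RelIso.mk (Equiv.ofBijective f hf) fun {i j} => ?_ :
      pathGraph (n + 1) ≃g G).symm⟩⟩
    rw [Equiv.ofBijective_apply, Equiv.ofBijective_apply, pathGraph_adj]
    refine ⟨fun h => ?_, by rintro (h | h); exacts [hsucc h, (hsucc h).symm]⟩
    have hij : i.val ≠ j.val := fun hij => h.ne (congrArg f (Fin.ext hij))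
    rcases hadj h with h' | h' | ⟨hi, hj⟩ | ⟨hi, hj⟩
    · exact .inl h'
    · exact .inr h'
    · rw [hstart hi, hend hj] at h
      have : ¬ 2 ≤ n := fun hn => hcyc ⟨h, hn⟩
      omega
    · rw [hstart hj, hend hi] at h
      have : ¬ 2 ≤ n := fun hn => hcyc ⟨h.symm, hn⟩
      omega

theorem IsBipartition.isBipartiteWith {X Y : Set V} (h : IsBipartition G X Y) :
    G.IsBipartiteWith X Y :=
  ⟨h.2.1, h.2.2⟩

theorem IsCycleGraph.even {n : ℕ} (h : IsCycleGraph G n) (hG : G.Colorable 2) : Even n := by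
  obtain ⟨hn, ⟨e⟩⟩ := h
  by_contra hodd
  have := (hG.of_hom e.symm.toHom).chromaticNumber_le
  rw [chromaticNumber_cycleGraph_of_odd n (by omega) (Nat.not_even_iff_odd.mp hodd)] at this
  norm_num at this

end

theorem stmt4_general {V : Type*} [Fintype V] (G : SimpleGraph V) (X Y : Set V)
    (hbip : IsBipartition G X Y) (hconn : G.Connected) (hfree : SFree 1 2 G)
    (hnpath : ¬ IsPathGraph G) (hncycle : ¬ ∃ n, Even n ∧ IsCycleGraph G n)
    (u₁ u₂ u₃ u₄ : V)
    (hne : u₁ ≠ u₂ ∧ u₁ ≠ u₃ ∧ u₁ ≠ u₄ ∧ u₂ ≠ u₃ ∧ u₂ ≠ u₄ ∧ u₃ ≠ u₄)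
    (h12 : G.Adj u₁ u₂) (h23 : G.Adj u₂ u₃) (h34 : G.Adj u₃ u₄)
    (h14 : ¬ G.Adj u₁ u₄) :
    (G.neighborSet u₁).ncard ≠ 2 ∨ (G.neighborSet u₂).ncard ≠ 2 ∨
      (G.neighborSet u₃).ncard ≠ 2 ∨ (G.neighborSet u₄).ncard ≠ 2 := by
  by_contra! ⟨hd₁, hd₂, hd₃, hd₄⟩
  have hcol : G.Colorable 2 := hbip.isBipartiteWith.isBipartite
  have htri : G.CliqueFree 3 := hcol.cliqueFree (by norm_num)
  have hpath : IsInducedDegreeTwoPath G u₁ u₂ u₃ u₄ :=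
    ⟨h12, h23, h34, hne.2.1, hne.2.2.2.2.1, h14, hd₁, hd₂, hd₃, hd₄⟩
  rcases hconn.isPathGraph_or_isCycleGraph (hpath.ncard_neighborSet_le_two hfree htri hconn.1)
    with h | h
  · exact hnpath h
  · exact hncycle ⟨_, h.even hcol, h⟩

/-- In a connected `S_{1,2}`-free bipartite graph which is not a path, not an even cycle
and not a complete bipartite graph minus a matching, every induced path `u₁u₂u₃u₄` has a
vertex of degree different from `2`. -/
theorem stmt4 {V : Type*} [Fintype V] (G : SimpleGraph V) (X Y : Set V)
    (hbip : IsBipartition G X Y) (hconn : G.Connected) (hfree : SFree 1 2 G)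
    (hnpath : ¬ IsPathGraph G) (hncycle : ¬ ∃ n, Even n ∧ IsCycleGraph G n)
    (hncbm : ¬ IsCompleteBipartiteMinusMatching G)
    (u₁ u₂ u₃ u₄ : V)
    (hne : u₁ ≠ u₂ ∧ u₁ ≠ u₃ ∧ u₁ ≠ u₄ ∧ u₂ ≠ u₃ ∧ u₂ ≠ u₄ ∧ u₃ ≠ u₄)
    (h12 : G.Adj u₁ u₂) (h23 : G.Adj u₂ u₃) (h34 : G.Adj u₃ u₄)
    (h13 : ¬ G.Adj u₁ u₃) (h14 : ¬ G.Adj u₁ u₄) (h24 : ¬ G.Adj u₂ u₄) :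
    (G.neighborSet u₁).ncard ≠ 2 ∨ (G.neighborSet u₂).ncard ≠ 2 ∨
      (G.neighborSet u₃).ncard ≠ 2 ∨ (G.neighborSet u₄).ncard ≠ 2 :=
  stmt4_general G X Y hbip hconn hfree hnpath hncycle u₁ u₂ u₃ u₄ hne h12 h23 h34 h14
end

section
/- The double graph of any cycle of length at least 3 contains a Hamilton cycle. -/
open SimpleGraph

/-- The double graph of `R`: two copies of `R`, and for every edge `uv` of `R` also the
edges between `u` and the copy of `v`, and between the copy of `u` and `v`. -/
def doubleGraph {α : Type*} (R : SimpleGraph α) : SimpleGraph (α × Bool) where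
  Adj a b := R.Adj a.1 b.1
  symm := ⟨fun a b h => R.adj_symm h⟩
  loopless := ⟨fun a h => R.irrefl h⟩

/-!
Sending vertex `k` of the cycle of length `2n` to `(k mod n, k div n)` is a bijection onto the
vertices of the double graph of the `n`-cycle, and it maps edges to edges: consecutive
vertices of the long cycle are consecutive modulo `n`, and the double graph joins `(u, b)` to
`(v, b')` whenever `u v` is an edge, whatever `b, b'`. So the Hamilton cycle of the
`2n`-cycle is carried onto a Hamilton cycle of the double graph.
-/

namespace SimpleGraph

variable {V W : Type*}

theorem IsHamiltonian.map [Fintype V] [Fintype W] [DecidableEq V] [DecidableEq W]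
    {G : SimpleGraph V} {H : SimpleGraph W} (hG : G.IsHamiltonian) (f : G →g H)
    (hf : Function.Bijective f) : H.IsHamiltonian := by
  intro hW
  obtain ⟨a, p, hp⟩ := hG (by rwa [Fintype.card_of_bijective hf])
  exact ⟨f a, p.map f, hp.map hf⟩

theorem cycleGraph_isHamiltonian {n : ℕ} (hn : 3 ≤ n) : (cycleGraph n).IsHamiltonian := by
  obtain ⟨m, rfl⟩ : ∃ m, n = m + 3 := ⟨n - 3, by omega⟩
  exact fun _ ↦ ⟨0, cycleGraph.cycle m,
    Walk.isHamiltonianCycle_iff_isCycle_and_length_eq.mpr ⟨cycleGraph.isCycle_cycle, by simp⟩⟩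

theorem cycleGraph_adj_iff_val_s6 {n : ℕ} (hn : 2 ≤ n) {u v : Fin n} :
    (cycleGraph n).Adj u v ↔ u.val = (v.val + 1) % n ∨ v.val = (u.val + 1) % n := by
  obtain ⟨m, rfl⟩ : ∃ m, n = m + 2 := ⟨n - 2, by omega⟩
  simp only [cycleGraph_adj, sub_eq_iff_eq_add, Fin.ext_iff, Fin.val_add, Fin.val_one,
    add_comm 1]

def cycleGraph.modNatHom (m : ℕ) {n : ℕ} (hn : 2 ≤ n) :
    cycleGraph (m * n) →g cycleGraph n where
  toFun := Fin.modNat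
  map_rel' {u v} huv := by
    have hmn : 2 ≤ m * n := by
      rcases Nat.eq_zero_or_pos m with rfl | hm
      · exact absurd u.isLt (by simp)
      · nlinarith
    rw [cycleGraph_adj_iff_val_s6 hmn] at huv
    rw [cycleGraph_adj_iff_val_s6 hn, Fin.coe_modNat, Fin.coe_modNat, Nat.mod_add_mod,
      Nat.mod_add_mod]
    rcases huv with h | h
    · exact .inl (by rw [h, Nat.mod_mul_left_mod])
    · exact .inr (by rw [h, Nat.mod_mul_left_mod])

end SimpleGraph

def doubleGraph.liftHom {V α : Type*} {G : SimpleGraph V} {R : SimpleGraph α} (f : G →g R)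
    (b : V → Bool) : G →g doubleGraph R where
  toFun v := (f v, b v)
  map_rel' h := f.map_rel h

/-- The double graph of any cycle of length at least `3` contains a Hamilton cycle. -/
theorem stmt6 (n : ℕ) (hn : 3 ≤ n) : (doubleGraph (cycleGraph n)).IsHamiltonian := by
  let e : Fin (2 * n) ≃ Fin n × Bool := finProdFinEquiv.symm.trans
    ((Equiv.prodComm _ _).trans (Equiv.prodCongr (Equiv.refl _) finTwoEquiv))
  let f := doubleGraph.liftHom (cycleGraph.modNatHom 2 (n := n) (by omega))
    (fun k ↦ finTwoEquiv k.divNat)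
  -- `f` and `e` are the same function, definitionally.
  exact (cycleGraph_isHamiltonian (by omega)).map f e.bijective
end

section
/- Every connected balanced S_{1,3}-free bipartite graph with minimum degree at least 4 contains a 2-factor. -/
open SimpleGraph

/-!
Two vertices with a common neighbour have neighbourhoods differing in at most two vertices:
three private neighbours of one of them would span an induced `S_{1,3}` with the common
neighbour and the other vertex. Moving inside `Y` from vertex to vertex through common
neighbours, either every two vertices of `Y` share a neighbour, or one meets `p, m, q` where `m`
shares neighbours with `p` and `q` but `p` and `q` do not; then every vertex sharing a neighbour
with `m` has degree at most `4`, and this property spreads over all of `Y`.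

Hall's condition on `X` then holds for `G` and for `G` minus a perfect matching. When all degrees
in `Y` are at most `4` this is a double count. In the dense case, for `S ⊆ X`: if some `y` has at
most one neighbour in `S`, then every `y` has at most three and double counting applies again;
otherwise every `y` keeps a neighbour in `S` after the matching is removed, and `|Y| = |X|`.
So `G` has two disjoint perfect matchings, and their union is a `2`-factor.
-/

open Finset

namespace IsBipartition

variable {V : Type*} {G H : SimpleGraph V} {X Y : Set V}

theorem isBipartiteWith_s8 (h : IsBipartition G X Y) : G.IsBipartiteWith X Y :=
  ⟨h.2.1, h.2.2⟩

theorem mono (h : IsBipartition G X Y) (hHG : H ≤ G) : IsBipartition H X Y :=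
  ⟨h.1, h.2.1, fun _ _ huv => h.2.2 (hHG huv)⟩

theorem cliqueFree_three (h : IsBipartition G X Y) : G.CliqueFree 3 :=
  h.isBipartiteWith_s8.isBipartite.cliqueFree (by norm_num)

theorem mem_of_mem_biUnion_neighborFinset [Fintype V] [DecidableEq V] [DecidableRel G.Adj]
    (h : IsBipartition G X Y) {S : Finset V} (hS : ↑S ⊆ X) {y : V}
    (hy : y ∈ S.biUnion fun x => G.neighborFinset x) : y ∈ Y := by
  obtain ⟨x, hx, hxy⟩ := mem_biUnion.mp hy
  exact h.isBipartiteWith_s8.mem_of_mem_adj (hS hx) ((G.mem_neighborFinset x y).mp hxy)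

end IsBipartition

namespace SimpleGraph

variable {V : Type*} [Fintype V] {G : SimpleGraph V} [DecidableRel G.Adj] {X Y : Set V}

theorem reflTransGen_not_disjoint_neighborFinset (hbip : IsBipartition G X Y) {y y' : V}
    (hy : y ∈ Y) (hy' : y' ∈ Y) (hr : G.Reachable y y') :
    Relation.ReflTransGen
      (fun a b => ¬Disjoint (G.neighborFinset a) (G.neighborFinset b)) y y' := by
  obtain ⟨p₀⟩ := hr
  suffices ∀ {v} (p : G.Walk v y'),
      (v ∈ Y → Relation.ReflTransGen
        (fun a b => ¬Disjoint (G.neighborFinset a) (G.neighborFinset b)) v y') ∧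
      (v ∈ X → ∃ u, G.Adj v u ∧ Relation.ReflTransGen
        (fun a b => ¬Disjoint (G.neighborFinset a) (G.neighborFinset b)) u y') from
    (this p₀).1 hy
  intro v p
  clear p₀ hy
  induction p with
  | nil => exact ⟨fun _ => .refl, fun hX => absurd hy' (Set.disjoint_left.mp hbip.2.1 hX)⟩
  | @cons v w _ hvw _ ih =>
    obtain ⟨ihY, ihX⟩ := ih hy'
    refine ⟨fun hv => ?_, fun hv => ⟨w, hvw, ihY (hbip.isBipartiteWith_s8.mem_of_mem_adj hv hvw)⟩⟩
    obtain ⟨u, hwu, hu⟩ := ihX (hbip.isBipartiteWith_s8.mem_of_mem_adj' hv hvw.symm)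
    exact .head (not_disjoint_iff.mpr ⟨w, by simpa using hvw, by simpa using hwu.symm⟩) hu

variable [DecidableEq V]

theorem card_neighborFinset_sdiff_le_two (h3 : G.CliqueFree 3) (hfree : SFree 1 3 G) {b w : V}
    (hbw : ¬Disjoint (G.neighborFinset b) (G.neighborFinset w)) :
    #(G.neighborFinset b \ G.neighborFinset w) ≤ 2 := by
  obtain ⟨a, hba, hwa⟩ := not_disjoint_iff.mp hbw
  rw [mem_neighborFinset] at hba hwa
  have tri {u v x : V} (huv : G.Adj u v) (hvx : G.Adj v x) : ¬G.Adj u x := fun hux =>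
    h3 {u, v, x} (is3Clique_triple_iff.mpr ⟨huv, hux, hvx⟩)
  by_contra! hcard
  obtain ⟨t, hts, ht⟩ := exists_subset_card_eq hcard
  obtain ⟨l₁, l₂, l₃, h₁₂, h₁₃, h₂₃, rfl⟩ := card_eq_three.mp ht
  simp only [insert_subset_iff, singleton_subset_iff, mem_sdiff, mem_neighborFinset] at hts
  obtain ⟨⟨hb₁, hw₁⟩, ⟨hb₂, hw₂⟩, ⟨hb₃, hw₃⟩⟩ := hts
  -- the induced `S_{1,3}` has central edge `a b`, leaf `w` at `a` and leaves `lᵢ` at `b`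
  have hbw : ¬G.Adj b w := tri hba hwa.symm
  have ha₁ : ¬G.Adj a l₁ := tri hba.symm hb₁
  have ha₂ : ¬G.Adj a l₂ := tri hba.symm hb₂
  have ha₃ : ¬G.Adj a l₃ := tri hba.symm hb₃
  have h₁₂' : ¬G.Adj l₁ l₂ := tri hb₁.symm hb₂
  have h₁₃' : ¬G.Adj l₁ l₃ := tri hb₁.symm hb₃
  have h₂₃' : ¬G.Adj l₂ l₃ := tri hb₂.symm hb₃
  have adj_iff : ∀ i j, G.Adj (![a, b, w, l₁, l₂, l₃] i) (![a, b, w, l₁, l₂, l₃] j) ↔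
      (starStar 1 3).Adj i j := by
    intro i j
    fin_cases i <;> fin_cases j <;> simp [starStar, G.adj_comm, *]
  refine hfree ⟨⟨![a, b, w, l₁, l₂, l₃], fun i j hij => ?_⟩, adj_iff⟩
  -- distinct vertices of `S_{1,3}` have distinct neighbourhoods, except for the leaves `lᵢ`
  have hrow : ∀ k, (starStar 1 3).Adj i k ↔ (starStar 1 3).Adj j k := fun k => by
    rw [← adj_iff, ← adj_iff, hij]
  fin_cases i <;> fin_cases j <;> simp [starStar, Fin.forall_fin_succ] at hrow hij ⊢ <;> simp_all

theorem degree_le_four_of_card_inter_le_two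
    (hP : ∀ a b, ¬Disjoint (G.neighborFinset a) (G.neighborFinset b) →
      #(G.neighborFinset a \ G.neighborFinset b) ≤ 2) {y z : V}
    (hzy : ¬Disjoint (G.neighborFinset z) (G.neighborFinset y))
    (h : #(G.neighborFinset z ∩ G.neighborFinset y) ≤ 2) : G.degree z ≤ 4 := by
  have := card_inter_add_card_sdiff (G.neighborFinset z) (G.neighborFinset y)
  have := hP z y hzy
  rw [card_neighborFinset_eq_degree] at *
  omega

theorem card_inter_le_two_of_disjoint
    (hP : ∀ a b, ¬Disjoint (G.neighborFinset a) (G.neighborFinset b) →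
      #(G.neighborFinset a \ G.neighborFinset b) ≤ 2) {y w z : V}
    (hyw : ¬Disjoint (G.neighborFinset y) (G.neighborFinset w))
    (hzw : Disjoint (G.neighborFinset z) (G.neighborFinset w)) :
    #(G.neighborFinset z ∩ G.neighborFinset y) ≤ 2 := by
  refine (card_le_card fun u hu => ?_).trans (hP y w hyw)
  rw [mem_inter] at hu
  exact mem_sdiff.mpr ⟨hu.2, Finset.disjoint_left.mp hzw hu.1⟩

theorem degree_le_four_of_not_disjoint_middle
    (hP : ∀ a b, ¬Disjoint (G.neighborFinset a) (G.neighborFinset b) →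
      #(G.neighborFinset a \ G.neighborFinset b) ≤ 2) {p m q z : V}
    (hpq : Disjoint (G.neighborFinset p) (G.neighborFinset q))
    (hpm : ¬Disjoint (G.neighborFinset p) (G.neighborFinset m))
    (hmq : ¬Disjoint (G.neighborFinset m) (G.neighborFinset q))
    (hzm : ¬Disjoint (G.neighborFinset z) (G.neighborFinset m)) : G.degree z ≤ 4 := by
  by_cases hzq : Disjoint (G.neighborFinset z) (G.neighborFinset q)
  · exact degree_le_four_of_card_inter_le_two hP hzm (card_inter_le_two_of_disjoint hP hmq hzq)
  by_cases hzp : Disjoint (G.neighborFinset z) (G.neighborFinset p)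
  · exact degree_le_four_of_card_inter_le_two hP hzm
      (card_inter_le_two_of_disjoint hP (disjoint_comm.not.mp hpm) hzp)
  · refine degree_le_four_of_card_inter_le_two hP hzp ?_
    rw [inter_comm]
    exact card_inter_le_two_of_disjoint hP hzq hpq

theorem degree_le_four_of_not_disjoint_of_forall
    (hP : ∀ a b, ¬Disjoint (G.neighborFinset a) (G.neighborFinset b) →
      #(G.neighborFinset a \ G.neighborFinset b) ≤ 2)
    (hdeg : ∀ v, 4 ≤ G.degree v) {y y' z : V}
    (hy : ∀ z, ¬Disjoint (G.neighborFinset z) (G.neighborFinset y) → G.degree z ≤ 4)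
    (hyy' : ¬Disjoint (G.neighborFinset y) (G.neighborFinset y'))
    (hzy' : ¬Disjoint (G.neighborFinset z) (G.neighborFinset y')) : G.degree z ≤ 4 := by
  have hy' : G.degree y' ≤ 4 := hy y' (disjoint_comm.not.mp hyy')
  have hcommon : 1 < #(G.neighborFinset y' ∩ G.neighborFinset y) := by
    have := card_inter_add_card_sdiff (G.neighborFinset y') (G.neighborFinset y)
    have := hP y' y (disjoint_comm.not.mp hyy')
    have := hdeg y'
    rw [card_neighborFinset_eq_degree] at *
    omega
  obtain ⟨a, ha, b, hb, hab⟩ := one_lt_card.mp hcommon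
  rw [mem_inter] at ha hb
  by_cases hza : a ∈ G.neighborFinset z
  · exact hy z (not_disjoint_iff.mpr ⟨a, hza, ha.2⟩)
  by_cases hzb : b ∈ G.neighborFinset z
  · exact hy z (not_disjoint_iff.mpr ⟨b, hzb, hb.2⟩)
  refine degree_le_four_of_card_inter_le_two hP hzy' ?_
  calc #(G.neighborFinset z ∩ G.neighborFinset y')
      ≤ #(((G.neighborFinset y').erase a).erase b) := card_le_card fun u hu => by
        rw [mem_inter] at hu
        exact mem_erase.mpr ⟨by rintro rfl; exact hzb hu.1,
          mem_erase.mpr ⟨by rintro rfl; exact hza hu.1, hu.2⟩⟩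
    _ = G.degree y' - 2 := by
      rw [card_erase_of_mem (mem_erase.mpr ⟨Ne.symm hab, hb.1⟩), card_erase_of_mem ha.1,
        card_neighborFinset_eq_degree]
      rfl
    _ ≤ 2 := by omega

theorem dense_or_degree_le_four (hbip : IsBipartition G X Y) (hconn : G.Connected)
    (hP : ∀ a b, ¬Disjoint (G.neighborFinset a) (G.neighborFinset b) →
      #(G.neighborFinset a \ G.neighborFinset b) ≤ 2)
    (hdeg : ∀ v, 4 ≤ G.degree v) :
    (∀ y ∈ Y, ∀ y' ∈ Y, #(G.neighborFinset y \ G.neighborFinset y') ≤ 2) ∨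
      ∀ y ∈ Y, G.degree y ≤ 4 := by
  have hself (v : V) : ¬Disjoint (G.neighborFinset v) (G.neighborFinset v) := by
    rw [disjoint_self_iff_empty, ← card_eq_zero, card_neighborFinset_eq_degree]
    have := hdeg v
    omega
  by_cases hdense : ∀ y ∈ Y, ∀ y' ∈ Y, ¬Disjoint (G.neighborFinset y) (G.neighborFinset y')
  · exact .inl fun y hy y' hy' => hP y y' (hdense y hy y' hy')
  push Not at hdense
  obtain ⟨p, hp, q₀, hq₀, hpq₀⟩ := hdense
  obtain ⟨m, q, hpm, hmq, hpq⟩ : ∃ m q, ¬Disjoint (G.neighborFinset p) (G.neighborFinset m) ∧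
      ¬Disjoint (G.neighborFinset m) (G.neighborFinset q) ∧
      Disjoint (G.neighborFinset p) (G.neighborFinset q) := by
    by_contra! hclosed
    have hchain := reflTransGen_not_disjoint_neighborFinset hbip hp hq₀ (hconn p q₀)
    clear hq₀
    induction hchain with
    | refl => exact hself p hpq₀
    | tail _ hstep ih => exact hclosed _ _ ih hstep hpq₀
  refine .inr fun y hy => ?_
  have hchain := (reflTransGen_not_disjoint_neighborFinset hbip hp hy (hconn p y)).head
    (disjoint_comm.not.mp hpm)
  clear hy
  suffices ∀ z, ¬Disjoint (G.neighborFinset z) (G.neighborFinset y) → G.degree z ≤ 4 from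
    this y (hself y)
  induction hchain with
  | refl => exact fun z => degree_le_four_of_not_disjoint_middle hP hpq hpm hmq
  | tail _ hstep ih => exact fun z => degree_le_four_of_not_disjoint_of_forall hP hdeg ih hstep

theorem card_le_card_biUnion_neighborFinset_of_degree {S : Finset V} {d : ℕ} (hd : 0 < d)
    (hS : ∀ x ∈ S, d ≤ G.degree x)
    (hN : ∀ y ∈ S.biUnion (fun x => G.neighborFinset x), #(G.neighborFinset y ∩ S) ≤ d) :
    #S ≤ #(S.biUnion fun x => G.neighborFinset x) := by
  refine le_of_mul_le_mul_right (card_mul_le_card_mul G.Adj (fun x hx => ?_) fun y hy => ?_) hd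
  · calc d ≤ #(G.neighborFinset x) := (card_neighborFinset_eq_degree G x).symm ▸ hS x hx
      _ ≤ _ := card_le_card fun y hy => mem_filter.mpr
          ⟨mem_biUnion.mpr ⟨x, hx, hy⟩, (G.mem_neighborFinset x y).mp hy⟩
  · refine (card_le_card fun x hx => ?_).trans (hN y hy)
    rw [mem_bipartiteBelow] at hx
    exact mem_inter.mpr ⟨(G.mem_neighborFinset y x).mpr hx.2.symm, hx.1⟩

theorem card_le_card_biUnion_neighborFinset_of_dense {H : SimpleGraph V} [DecidableRel H.Adj]
    (hbip : IsBipartition G X Y) (hbal : X.ncard = Y.ncard) (hHG : H ≤ G)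
    (hdense : ∀ y ∈ Y, ∀ y' ∈ Y, #(G.neighborFinset y \ G.neighborFinset y') ≤ 2)
    (hX : ∀ x ∈ X, 3 ≤ H.degree x)
    (hY : ∀ y ∈ Y, #(G.neighborFinset y \ H.neighborFinset y) ≤ 1)
    {S : Finset V} (hS : ↑S ⊆ X) : #S ≤ #(S.biUnion fun x => H.neighborFinset x) := by
  by_cases hsmall : ∃ y₀ ∈ Y, #(G.neighborFinset y₀ ∩ S) ≤ 1
  · obtain ⟨y₀, hy₀, hy₀S⟩ := hsmall
    refine card_le_card_biUnion_neighborFinset_of_degree (d := 3) (by norm_num)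
      (fun x hx => hX x (hS hx)) fun y hy => ?_
    have hyY := (hbip.mono hHG).mem_of_mem_biUnion_neighborFinset hS hy
    calc #(H.neighborFinset y ∩ S)
        ≤ #(G.neighborFinset y₀ ∩ S ∪ G.neighborFinset y \ G.neighborFinset y₀) :=
          card_le_card fun x hx => by
            rw [mem_inter, mem_neighborFinset] at hx
            by_cases hx₀ : x ∈ G.neighborFinset y₀
            · exact mem_union_left _ (mem_inter.mpr ⟨hx₀, hx.2⟩)
            · exact mem_union_right _
                (mem_sdiff.mpr ⟨(G.mem_neighborFinset y x).mpr (hHG hx.1), hx₀⟩)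
      _ ≤ #(G.neighborFinset y₀ ∩ S) + #(G.neighborFinset y \ G.neighborFinset y₀) :=
          card_union_le _ _
      _ ≤ 1 + 2 := add_le_add hy₀S (hdense y hyY y₀ hy₀)
  · push Not at hsmall
    have hYN : Y ⊆ ↑(S.biUnion fun x => H.neighborFinset x) := fun y hy => by
      obtain ⟨x, hx, hxH⟩ := exists_mem_notMem_of_card_lt_card
        (s := G.neighborFinset y \ H.neighborFinset y) (t := G.neighborFinset y ∩ S)
        (by have := hsmall y hy; have := hY y hy; omega)
      rw [mem_inter] at hx
      have hyx : H.Adj y x := by simpa [hx.1] using hxH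
      exact mem_biUnion.mpr ⟨x, hx.2, (H.mem_neighborFinset x y).mpr hyx.symm⟩
    calc #S = (S : Set V).ncard := (Set.ncard_coe_finset S).symm
      _ ≤ X.ncard := Set.ncard_le_ncard hS
      _ = Y.ncard := hbal
      _ ≤ _ := Set.ncard_le_ncard hYN
      _ = _ := Set.ncard_coe_finset _

theorem card_le_card_biUnion_neighborFinset {H : SimpleGraph V} [DecidableRel H.Adj]
    (hbip : IsBipartition G X Y) (hbal : X.ncard = Y.ncard) (hdeg : ∀ x ∈ X, 4 ≤ G.degree x)
    (hG : (∀ y ∈ Y, ∀ y' ∈ Y, #(G.neighborFinset y \ G.neighborFinset y') ≤ 2) ∨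
      ∀ y ∈ Y, G.degree y ≤ 4)
    (hHG : H ≤ G) {k : ℕ} (hk : k ≤ 1) (hHdeg : ∀ v, H.degree v + k = G.degree v)
    {S : Finset V} (hS : ↑S ⊆ X) : #S ≤ #(S.biUnion fun x => H.neighborFinset x) := by
  rcases hG with hdense | hY
  · refine card_le_card_biUnion_neighborFinset_of_dense hbip hbal hHG hdense
      (fun x hx => by have := hHdeg x; have := hdeg x hx; omega) (fun y _ => ?_) hS
    rw [card_sdiff_of_subset fun x hx => by simpa using hHG (by simpa using hx),
      card_neighborFinset_eq_degree, card_neighborFinset_eq_degree]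
    have := hHdeg y
    omega
  · refine card_le_card_biUnion_neighborFinset_of_degree (d := 4 - k) (by omega)
      (fun x hx => by have := hHdeg x; have := hdeg x (hS hx); omega) fun y hy => ?_
    have := hY y ((hbip.mono hHG).mem_of_mem_biUnion_neighborFinset hS hy)
    have := hHdeg y
    calc #(H.neighborFinset y ∩ S) ≤ H.degree y :=
          card_neighborFinset_eq_degree H y ▸ card_le_card inter_subset_left
      _ ≤ 4 - k := by omega

theorem exists_isPerfectMatching_of_card_le_card_biUnion (hbip : IsBipartition G X Y)
    (hbal : X.ncard = Y.ncard)
    (hall : ∀ S : Finset V, ↑S ⊆ X → #S ≤ #(S.biUnion fun x => G.neighborFinset x)) :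
    ∃ M : G.Subgraph, M.IsPerfectMatching := by
  obtain ⟨f, hf_inj, hf⟩ := (all_card_le_biUnion_card_iff_exists_injective
    fun x : X => G.neighborFinset x).mp fun s => by
      simpa [image_biUnion, card_image_of_injective _ Subtype.val_injective] using
        hall (s.image Subtype.val) (by simp)
  have hfY (x : X) : f x ∈ Y :=
    hbip.isBipartiteWith_s8.mem_of_mem_adj x.2 ((G.mem_neighborFinset _ _).mp (hf x))
  let g : X → Y := fun x => ⟨f x, hfY x⟩
  have hg : g.Bijective := Function.Injective.bijective_of_nat_card_le
    (fun x x' h => hf_inj (congrArg Subtype.val h)) (by simp [Nat.card_coe_set_eq, hbal])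
  obtain ⟨M, hMverts, hM⟩ := Subgraph.IsMatching.exists_of_disjoint_sets_of_equiv hbip.2.1
    (Equiv.ofBijective g hg) fun x => (G.mem_neighborFinset _ _).mp (hf x)
  exact ⟨M, hM, Subgraph.isSpanning_iff.mpr (hMverts.trans (Set.eq_univ_of_forall hbip.1))⟩

theorem degree_sdiff_spanningCoe_add_one {M : G.Subgraph} [DecidableRel M.spanningCoe.Adj]
    (hM : M.IsPerfectMatching) (v : V) : (G \ M.spanningCoe).degree v + 1 = G.degree v := by
  obtain ⟨w, hvw, hw⟩ := Subgraph.isPerfectMatching_iff.mp hM v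
  have hN : M.spanningCoe.neighborFinset v = {w} := by
    ext u
    simpa using ⟨hw u, fun h => h ▸ hvw⟩
  rw [← card_neighborFinset_eq_degree, ← card_neighborFinset_eq_degree, neighborFinset_sdiff, hN,
    sdiff_singleton_eq_erase, card_erase_add_one ((G.mem_neighborFinset v w).mpr (M.adj_sub hvw))]

end SimpleGraph

namespace SimpleGraph.Subgraph

theorem ncard_neighborSet_sup_spanningCoe {V : Type*} {G G' : SimpleGraph V}
    {M : G.Subgraph} {M' : G'.Subgraph} (hM : M.IsPerfectMatching) (hM' : M'.IsPerfectMatching)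
    (hdisj : Disjoint M.spanningCoe M'.spanningCoe) (v : V) :
    ((M.spanningCoe ⊔ M'.spanningCoe).neighborSet v).ncard = 2 := by
  obtain ⟨w, hvw, hw⟩ := isPerfectMatching_iff.mp hM v
  obtain ⟨w', hvw', hw'⟩ := isPerfectMatching_iff.mp hM' v
  have hne : w ≠ w' := by
    rintro rfl
    exact hdisj.le_bot (show (M.spanningCoe ⊓ M'.spanningCoe).Adj v w from ⟨hvw, hvw'⟩)
  have hN : (M.spanningCoe ⊔ M'.spanningCoe).neighborSet v = {w, w'} := by
    ext u
    simp only [SimpleGraph.mem_neighborSet, SimpleGraph.sup_adj, spanningCoe_adj,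
      Set.mem_insert_iff, Set.mem_singleton_iff]
    exact ⟨Or.imp (hw u) (hw' u), by rintro (rfl | rfl) <;> simp [hvw, hvw']⟩
  rw [hN, Set.ncard_pair hne]

end SimpleGraph.Subgraph

theorem stmt8_general {V : Type*} [Fintype V] (G : SimpleGraph V)
    (X Y : Set V) (hbip : IsBipartition G X Y) (hbal : X.ncard = Y.ncard)
    (hconn : G.Connected) (hfree : SFree 1 3 G)
    (hdeg : ∀ v, 4 ≤ (G.neighborSet v).ncard) :
    ∃ H ≤ G, ∀ v, (H.neighborSet v).ncard = 2 := by
  classical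
  have hdeg' (v : V) : 4 ≤ G.degree v := by
    rw [← card_neighborFinset_eq_degree, ← Set.ncard_coe_finset, coe_neighborFinset]
    exact hdeg v
  have hG := dense_or_degree_le_four hbip hconn
    (fun _ _ => card_neighborFinset_sdiff_le_two hbip.cliqueFree_three hfree) hdeg'
  obtain ⟨M, hM⟩ := exists_isPerfectMatching_of_card_le_card_biUnion hbip hbal fun _ =>
    card_le_card_biUnion_neighborFinset hbip hbal (fun x _ => hdeg' x) hG le_rfl zero_le_one
      fun _ => rfl
  obtain ⟨M', hM'⟩ := exists_isPerfectMatching_of_card_le_card_biUnion (hbip.mono sdiff_le) hbal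
    fun _ => card_le_card_biUnion_neighborFinset hbip hbal (fun x _ => hdeg' x) hG sdiff_le le_rfl
      (degree_sdiff_spanningCoe_add_one hM)
  exact ⟨M.spanningCoe ⊔ M'.spanningCoe, sup_le M.spanningCoe_le (M'.spanningCoe_le.trans sdiff_le),
    Subgraph.ncard_neighborSet_sup_spanningCoe hM hM'
      (disjoint_sdiff_self_right.mono_right M'.spanningCoe_le)⟩

/-- Every connected balanced `S_{1,3}`-free bipartite graph with minimum degree at least
`4` contains a `2`-factor. -/
theorem stmt8 {V : Type*} [Fintype V] [DecidableEq V] (G : SimpleGraph V)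
    (X Y : Set V) (hbip : IsBipartition G X Y) (hbal : X.ncard = Y.ncard)
    (hconn : G.Connected) (hfree : SFree 1 3 G)
    (hdeg : ∀ v, 4 ≤ (G.neighborSet v).ncard) :
    ∃ H ≤ G, ∀ v, (H.neighborSet v).ncard = 2 :=
  stmt8_general G X Y hbip hbal hconn hfree hdeg
end

section
/- Let G be a connected balanced S_{1,3}-free bipartite graph with minimum degree at least 4, and let F be a 2-factor of G with the minimum number of connected components. Then for every vertex u of G, the neighborhood N_G(u) is contained in at most two components of F. -/
open SimpleGraph

/-!
Suppose `N_G(u)` meets three components of `F`; then it has neighbours `v, w` lying in two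
components of `F` other than the one of `u`. Let `x, y` be the `F`-neighbours of `u` and `a` an
`F`-neighbour of `v`. Bipartiteness makes `{v, u, a, x, y, w}` an induced `S_{1,3}` (centres `v`
and `u`) unless `a` is adjacent to one of `x, y, w`. If `a ~ x`, replacing the edges `ux, va` of
`F` by `uv, ax` merges the cycles through `u` and `v` into one, contradicting minimality; the
same holds for `y`. Hence `a ~ w`, and symmetrically some `F`-neighbour `b` of `w` satisfies
`b ~ v`; now replacing `wb, va` by `bv, aw` merges the cycles through `v` and `w`.
-/

theorem Set.exists_pair_ne_of_two_lt_ncard {α : Type*} {s : Set α} (hs : 2 < s.ncard) (c : α) :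
    ∃ a ∈ s, ∃ b ∈ s, a ≠ b ∧ a ≠ c ∧ b ≠ c := by
  have hfin : (s \ {c}).Finite := (Set.finite_of_ncard_pos (by omega)).sdiff
  have : 1 < (s \ {c}).ncard := by
    have := Set.pred_ncard_le_ncard_sdiff_singleton s c
    omega
  obtain ⟨a, ⟨has, hac⟩, b, ⟨hbs, hbc⟩, hab⟩ := (Set.one_lt_ncard hfin).1 this
  exact ⟨a, has, b, hbs, hab, hac, hbc⟩

theorem IsBipartition.not_adj_of_adj_of_adj {V : Type*} {G : SimpleGraph V} {X Y : Set V}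
    (hbip : IsBipartition G X Y) {a b c : V} (hab : G.Adj a b) (hac : G.Adj a c) :
    ¬ G.Adj b c := by
  intro hbc
  have hdisj := Set.disjoint_left.1 hbip.2.1
  rcases hbip.2.2 hab with ⟨ha, hb⟩ | ⟨ha, hb⟩ <;>
    rcases hbip.2.2 hac with ⟨ha', hc⟩ | ⟨ha', hc⟩ <;>
    rcases hbip.2.2 hbc with ⟨hb', hc'⟩ | ⟨hb', hc'⟩ <;> tauto

theorem IsBipartition.adj_of_sFree_one_three {V : Type*} {G : SimpleGraph V} {X Y : Set V}
    (hbip : IsBipartition G X Y) (hfree : SFree 1 3 G) {u v t x y z : V}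
    (huv : G.Adj u v) (hvt : G.Adj v t) (htu : t ≠ u)
    (hx : G.Adj u x) (hy : G.Adj u y) (hz : G.Adj u z)
    (hxy : x ≠ y) (hxz : x ≠ z) (hyz : y ≠ z)
    (hvx : v ≠ x) (hvy : v ≠ y) (hvz : v ≠ z) :
    G.Adj t x ∨ G.Adj t y ∨ G.Adj t z := by
  by_contra! ⟨htx, hty, htz⟩
  have hut := hbip.not_adj_of_adj_of_adj huv.symm hvt
  have hvx' := hbip.not_adj_of_adj_of_adj huv hx
  have hvy' := hbip.not_adj_of_adj_of_adj huv hy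
  have hvz' := hbip.not_adj_of_adj_of_adj huv hz
  have hxy' := hbip.not_adj_of_adj_of_adj hx hy
  have hxz' := hbip.not_adj_of_adj_of_adj hx hz
  have hyz' := hbip.not_adj_of_adj_of_adj hy hz
  refine hfree ⟨⟨![v, u, t, x, y, z], ?_⟩, ?_⟩
  · simp only [Function.Injective, Fin.forall_fin_succ, Matrix.cons_val_zero,
      Matrix.cons_val_succ, Matrix.cons_val_fin_one, IsEmpty.forall_iff]
    grind [SimpleGraph.Adj.ne]
  · intro a b
    fin_cases a <;> fin_cases b <;> simp [starStar, *, G.adj_comm]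

namespace SimpleGraph

variable {V : Type*} {F G H H' : SimpleGraph V} {u x v a : V}

theorem Reachable.deleteEdges_of_not_reachable {p q c d : V} (h : H.Reachable p q)
    (hc : ¬ H.Reachable p c) : (H.deleteEdges {s(c, d)}).Reachable p q := by
  classical
  obtain ⟨w⟩ := h
  refine reachable_deleteEdges_iff_exists_walk.2 ⟨w, fun hcd => hc ?_⟩
  exact (w.takeUntil c (w.fst_mem_support_of_mem_edges hcd)).reachable

theorem reachable_of_forall_adj_reachable (h : ∀ p q, F.Adj p q → H.Reachable p q) {p q : V}
    (hpq : F.Reachable p q) : H.Reachable p q := by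
  obtain ⟨w⟩ := hpq
  induction w with
  | nil => rfl
  | cons hadj _ ih => exact (h _ _ hadj).trans ih

theorem card_connectedComponent_le_of_forall_adj_reachable [Finite V] (hle : H ≤ F)
    (h : ∀ p q, F.Adj p q → H.Reachable p q) :
    Nat.card H.ConnectedComponent ≤ Nat.card F.ConnectedComponent := by
  refine Nat.card_le_card_of_injective (ConnectedComponent.map (Hom.ofLE hle)) ?_
  refine ConnectedComponent.ind₂ fun p q hpq => ?_
  exact ConnectedComponent.sound
    (reachable_of_forall_adj_reachable h (ConnectedComponent.exact hpq))

theorem card_connectedComponent_lt_of_le_of_adj [Finite V] (hle : H ≤ H') {p q : V}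
    (hadj : H'.Adj p q) (hpq : ¬ H.Reachable p q) :
    Nat.card H'.ConnectedComponent < Nat.card H.ConnectedComponent := by
  refine lt_of_not_ge fun hcard => hpq (ConnectedComponent.exact ?_)
  have hmap := (ConnectedComponent.surjective_map_ofLE hle).bijective_of_nat_card_le hcard
  exact hmap.injective (ConnectedComponent.sound hadj.reachable)

def twoSwitch (F : SimpleGraph V) (u x v a : V) : SimpleGraph V :=
  F.deleteEdges {s(u, x), s(v, a)} ⊔ edge u v ⊔ edge a x

theorem deleteEdges_le_twoSwitch : F.deleteEdges {s(u, x), s(v, a)} ≤ twoSwitch F u x v a :=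
  le_sup_left.trans le_sup_left

theorem twoSwitch_comm : twoSwitch F u x v a = twoSwitch F v a u x := by
  ext p q
  simp only [twoSwitch, sup_adj, deleteEdges_adj, edge_adj, Set.mem_insert_iff,
    Set.mem_singleton_iff]
  tauto

theorem twoSwitch_swap : twoSwitch F u x v a = twoSwitch F x u a v := by
  ext p q
  simp only [twoSwitch, sup_adj, deleteEdges_adj, edge_adj, Set.mem_insert_iff,
    Set.mem_singleton_iff, Sym2.eq_swap (a := u), Sym2.eq_swap (a := v)]
  tauto

theorem twoSwitch_le (hFG : F ≤ G) (huv : G.Adj u v) (hax : G.Adj a x) :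
    twoSwitch F u x v a ≤ G :=
  sup_le (sup_le ((deleteEdges_le _).trans hFG) ((edge_le_iff G).2 (.inr huv)))
    ((edge_le_iff G).2 (.inr hax))

theorem neighborSet_twoSwitch (hux : F.Adj u x) (hva : F.Adj v a) (hsep : ¬ F.Reachable u v) :
    (twoSwitch F u x v a).neighborSet u = insert v (F.neighborSet u \ {x}) := by
  have huv : u ≠ v := fun h => hsep (h ▸ .rfl)
  have hua : u ≠ a := fun h => hsep (h ▸ hva.reachable.symm)
  ext z
  simp only [twoSwitch, neighborSet_sup, Set.mem_union, mem_neighborSet, deleteEdges_adj,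
    edge_adj, Set.mem_insert_iff, Set.mem_singleton_iff, Set.mem_sdiff, Sym2.eq_iff]
  grind [SimpleGraph.Adj.ne, SimpleGraph.Adj.reachable]

theorem neighborSet_twoSwitch_of_ne {w : V} (hu : w ≠ u) (hx : w ≠ x) (hv : w ≠ v)
    (ha : w ≠ a) : (twoSwitch F u x v a).neighborSet w = F.neighborSet w := by
  ext z
  simp only [twoSwitch, neighborSet_sup, Set.mem_union, mem_neighborSet, deleteEdges_adj,
    edge_adj, Set.mem_insert_iff, Set.mem_singleton_iff, Sym2.eq_iff]
  grind

theorem ncard_neighborSet_twoSwitch_self (hux : F.Adj u x) (hva : F.Adj v a)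
    (hsep : ¬ F.Reachable u v) :
    ((twoSwitch F u x v a).neighborSet u).ncard = (F.neighborSet u).ncard := by
  rw [neighborSet_twoSwitch hux hva hsep]
  exact Set.ncard_exchange (fun h => hsep (Adj.reachable h)) hux

theorem ncard_neighborSet_twoSwitch (hux : F.Adj u x) (hva : F.Adj v a)
    (hsep : ¬ F.Reachable u v) (w : V) :
    ((twoSwitch F u x v a).neighborSet w).ncard = (F.neighborSet w).ncard := by
  have hsep' : ¬ F.Reachable x a := fun h =>
    hsep (hux.reachable.trans (h.trans hva.reachable.symm))
  obtain rfl | hu := eq_or_ne w u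
  · exact ncard_neighborSet_twoSwitch_self hux hva hsep
  obtain rfl | hv := eq_or_ne w v
  · rw [twoSwitch_comm]
    exact ncard_neighborSet_twoSwitch_self hva hux (fun h => hsep h.symm)
  obtain rfl | hx := eq_or_ne w x
  · rw [twoSwitch_swap]
    exact ncard_neighborSet_twoSwitch_self hux.symm hva.symm hsep'
  obtain rfl | ha := eq_or_ne w a
  · rw [twoSwitch_swap, twoSwitch_comm]
    exact ncard_neighborSet_twoSwitch_self hva.symm hux.symm (fun h => hsep' h.symm)
  rw [neighborSet_twoSwitch_of_ne hu hx hv ha]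

theorem card_connectedComponent_twoSwitch_lt [Finite V] (hF : F.IsCycles) (hux : F.Adj u x)
    (hva : F.Adj v a) (hsep : ¬ F.Reachable u v) :
    Nat.card (twoSwitch F u x v a).ConnectedComponent < Nat.card F.ConnectedComponent := by
  have huv : u ≠ v := fun h => hsep (h ▸ .rfl)
  set K := F.deleteEdges {s(u, x), s(v, a)}
  have hKux : K.Reachable u x := by
    rw [show K = (F.deleteEdges {s(u, x)}).deleteEdges {s(v, a)} by
      rw [deleteEdges_deleteEdges, ← Set.insert_eq]]
    exact Reachable.deleteEdges_of_not_reachable (hF.reachable_deleteEdges hux)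
      fun h => hsep (h.mono (deleteEdges_le _))
  have hKva : K.Reachable v a := by
    rw [show K = (F.deleteEdges {s(v, a)}).deleteEdges {s(u, x)} by
      rw [deleteEdges_deleteEdges, Set.union_comm, ← Set.insert_eq]]
    exact Reachable.deleteEdges_of_not_reachable (hF.reachable_deleteEdges hva)
      fun h => hsep (h.mono (deleteEdges_le _)).symm
  have hK : ∀ p q, F.Adj p q → K.Reachable p q := by
    intro p q hpq
    by_cases he : s(p, q) ∈ ({s(u, x), s(v, a)} : Set (Sym2 V))
    · rcases he with he | he <;> rcases Sym2.eq_iff.1 he with ⟨rfl, rfl⟩ | ⟨rfl, rfl⟩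
      exacts [hKux, hKux.symm, hKva, hKva.symm]
    · exact Adj.reachable (deleteEdges_adj.2 ⟨hpq, he⟩)
  calc Nat.card (twoSwitch F u x v a).ConnectedComponent
      < Nat.card K.ConnectedComponent :=
        card_connectedComponent_lt_of_le_of_adj deleteEdges_le_twoSwitch
          (by simp [twoSwitch, edge_adj, huv]) fun h => hsep (h.mono (deleteEdges_le _))
    _ ≤ Nat.card F.ConnectedComponent :=
        card_connectedComponent_le_of_forall_adj_reachable (deleteEdges_le _) hK

end SimpleGraph

section MinimalTwoFactor

variable {V : Type*} {G F : SimpleGraph V}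

theorem exists_adj_adj_of_ncard_neighborSet_eq_two {u : V} (h : (F.neighborSet u).ncard = 2) :
    ∃ x y, x ≠ y ∧ F.Adj u x ∧ F.Adj u y := by
  obtain ⟨x, y, hxy, hN⟩ := Set.ncard_eq_two.1 h
  have hx : x ∈ F.neighborSet u := hN ▸ Set.mem_insert x {y}
  have hy : y ∈ F.neighborSet u := hN ▸ Set.mem_insert_of_mem x rfl
  exact ⟨x, y, hxy, hx, hy⟩

theorem reachable_of_minimal_two_factor [Finite V] (hFG : F ≤ G)
    (hF2 : ∀ v, (F.neighborSet v).ncard = 2)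
    (hmin : ∀ F' : SimpleGraph V, F' ≤ G → (∀ v, (F'.neighborSet v).ncard = 2) →
      Nat.card F.ConnectedComponent ≤ Nat.card F'.ConnectedComponent)
    ⦃p q r s : V⦄ (hpq : F.Adj p q) (hrs : F.Adj r s) (hpr : G.Adj p r) (hsq : G.Adj s q) :
    F.Reachable p r := by
  by_contra hsep
  refine (hmin _ (twoSwitch_le hFG hpr hsq) fun w => ?_).not_gt
    (card_connectedComponent_twoSwitch_lt (fun w _ => hF2 w) hpq hrs hsep)
  rw [ncard_neighborSet_twoSwitch hpq hrs hsep, hF2]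

theorem IsBipartition.adj_of_forall_twoSwitch_reachable {X Y : Set V}
    (hbip : IsBipartition G X Y) (hfree : SFree 1 3 G) (hFG : F ≤ G)
    (hno : ∀ ⦃p q r s : V⦄, F.Adj p q → F.Adj r s → G.Adj p r → G.Adj s q →
      F.Reachable p r)
    {u x y v w a : V} (hxy : x ≠ y) (hux : F.Adj u x) (huy : F.Adj u y)
    (huv : G.Adj u v) (huw : G.Adj u w) (hv : ¬ F.Reachable u v) (hw : ¬ F.Reachable u w)
    (hvw : v ≠ w) (hva : F.Adj v a) : G.Adj a w := by
  have hne {z : V} (hz : ¬ F.Reachable u z) : z ≠ x ∧ z ≠ y :=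
    ⟨fun h => hz (h ▸ hux.reachable), fun h => hz (h ▸ huy.reachable)⟩
  rcases hbip.adj_of_sFree_one_three hfree huv (hFG hva) (fun h => hv (h ▸ hva.reachable).symm)
      (hFG hux) (hFG huy) huw hxy (hne hw).1.symm (hne hw).2.symm (hne hv).1 (hne hv).2 hvw
    with hax | hay | haw
  · exact (hv (hno hux hva huv hax)).elim
  · exact (hv (hno huy hva huv hay)).elim
  · exact haw

end MinimalTwoFactor

theorem stmt9_general {V : Type*} [Fintype V] (G : SimpleGraph V)
    (X Y : Set V) (hbip : IsBipartition G X Y)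
    (hfree : SFree 1 3 G)
    (F : SimpleGraph V) (hFG : F ≤ G) (hF2 : ∀ v, (F.neighborSet v).ncard = 2)
    (hmin : ∀ F' : SimpleGraph V, F' ≤ G → (∀ v, (F'.neighborSet v).ncard = 2) →
      Nat.card F.ConnectedComponent ≤ Nat.card F'.ConnectedComponent)
    (u : V) :
    {c : F.ConnectedComponent | ∃ v, G.Adj u v ∧ F.connectedComponentMk v = c}.ncard ≤ 2 := by
  have hno := reachable_of_minimal_two_factor hFG hF2 hmin
  by_contra! h
  obtain ⟨_, ⟨v, huv, rfl⟩, _, ⟨w, huw, rfl⟩, hvw, hv, hw⟩ :=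
    Set.exists_pair_ne_of_two_lt_ncard h (F.connectedComponentMk u)
  simp only [ne_eq, ConnectedComponent.eq] at hvw hv hw
  obtain ⟨x, y, hxy, hux, huy⟩ := exists_adj_adj_of_ncard_neighborSet_eq_two (hF2 u)
  obtain ⟨a, -, -, hva, -⟩ := exists_adj_adj_of_ncard_neighborSet_eq_two (hF2 v)
  obtain ⟨b, -, -, hwb, -⟩ := exists_adj_adj_of_ncard_neighborSet_eq_two (hF2 w)
  have haw := hbip.adj_of_forall_twoSwitch_reachable hfree hFG hno hxy hux huy huv huw
    (fun h => hv h.symm) (fun h => hw h.symm) (fun h => hvw (h ▸ .rfl)) hva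
  have hbv := hbip.adj_of_forall_twoSwitch_reachable hfree hFG hno hxy hux huy huw huv
    (fun h => hw h.symm) (fun h => hv h.symm) (fun h => hvw (h ▸ .rfl)) hwb
  exact hvw ((hno hwb.symm hva hbv haw).symm.trans hwb.symm.reachable)

/-- If `F` is a `2`-factor with the minimum number of components of a connected balanced
`S_{1,3}`-free bipartite graph with minimum degree at least `4`, then the neighborhood of
every vertex meets at most two components of `F`. -/
theorem stmt9 {V : Type*} [Fintype V] (G : SimpleGraph V)
    (X Y : Set V) (hbip : IsBipartition G X Y) (hbal : X.ncard = Y.ncard)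
    (hconn : G.Connected) (hfree : SFree 1 3 G)
    (hdeg : ∀ v, 4 ≤ (G.neighborSet v).ncard)
    (F : SimpleGraph V) (hFG : F ≤ G) (hF2 : ∀ v, (F.neighborSet v).ncard = 2)
    (hmin : ∀ F' : SimpleGraph V, F' ≤ G → (∀ v, (F'.neighborSet v).ncard = 2) →
      Nat.card F.ConnectedComponent ≤ Nat.card F'.ConnectedComponent)
    (u : V) :
    {c : F.ConnectedComponent | ∃ v, G.Adj u v ∧ F.connectedComponentMk v = c}.ncard ≤ 2 :=
  stmt9_general G X Y hbip hfree F hFG hF2 hmin u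
end

section
/- Let G be a connected balanced S_{1,3}-free bipartite graph with minimum degree at least 4, and let F be a 2-factor of G with the minimum number of connected components, where F is disconnected. Then every connected component of F is a cycle of length 4. -/
open SimpleGraph

set_option maxHeartbeats 1000000

lemma degree_eq_ncard' {V : Type*} [Fintype V] (H : SimpleGraph V) (v : V)
    [inst : DecidableRel H.Adj] : H.degree v = (H.neighborSet v).ncard := by
  classical
  rw [SimpleGraph.degree, Set.ncard_eq_toFinset_card']
  congr 1

lemma oddcomp {V : Type*} [Fintype V] (H : SimpleGraph V) (x : V)
    (hx : Odd ((H.neighborSet x).ncard)) :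
    ∃ y, y ≠ x ∧ Odd ((H.neighborSet y).ncard) ∧ H.Reachable x y := by
  classical
  by_contra hcon
  push_neg at hcon
  set S : Set V := {v | H.Reachable x v} with hS
  have hclosed : ∀ ⦃v y : V⦄, v ∈ S → H.Adj v y → y ∈ S := by
    intro v y hv hadj
    exact hv.trans hadj.reachable
  let K := H.induce S
  have hdegpres : ∀ (v : V) (hv : v ∈ S),
      (K.neighborSet ⟨v, hv⟩).ncard = (H.neighborSet v).ncard := by
    intro v hv
    have himg : H.neighborSet v = Subtype.val '' (K.neighborSet ⟨v, hv⟩) := by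
      ext y
      constructor
      · intro hy
        exact ⟨⟨y, hclosed hv hy⟩, hy, rfl⟩
      · rintro ⟨⟨y', hy'⟩, hadj, rfl⟩
        exact hadj
    rw [himg, Set.ncard_image_of_injective _ Subtype.val_injective]
  have hxS : x ∈ S := Reachable.refl x
  have hfilter : (Finset.univ.filter (fun v : S => Odd (K.degree v))) = {⟨x, hxS⟩} := by
    ext ⟨v, hv⟩
    simp only [Finset.mem_filter, Finset.mem_univ, true_and, Finset.mem_singleton]
    rw [degree_eq_ncard', hdegpres v hv]
    constructor
    · intro hodd
      by_contra hne
      have hvx : v ≠ x := fun h => hne (by simp [Subtype.ext_iff, h])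
      exact hcon v hvx hodd hv
    · intro h
      rw [Subtype.ext_iff] at h
      rw [show v = x from h]
      exact hx
  have := SimpleGraph.even_card_odd_degree_vertices K
  rw [hfilter] at this
  simp at this

lemma exists_other {V : Type*} [Fintype V] {F : SimpleGraph V}
    (hF2 : ∀ v, (F.neighborSet v).ncard = 2) {x y : V} (h : F.Adj x y) :
    ∃ w, F.Adj x w ∧ w ≠ y ∧ ∀ t, F.Adj x t → t = y ∨ t = w := by
  obtain ⟨a, b, hab, hset⟩ := Set.ncard_eq_two.mp (hF2 x)
  have hmem : ∀ t, F.Adj x t ↔ t = a ∨ t = b := by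
    intro t
    constructor
    · intro ht
      have : t ∈ ({a, b} : Set V) := hset ▸ ht
      simpa using this
    · intro ht
      have : t ∈ ({a, b} : Set V) := by simpa using ht
      rw [← hset] at this
      exact this
  rcases (hmem y).mp h with rfl | rfl
  · exact ⟨b, (hmem b).mpr (Or.inr rfl), hab.symm, fun t ht => (hmem t).mp ht⟩
  · exact ⟨a, (hmem a).mpr (Or.inl rfl), hab, fun t ht => ((hmem t).mp ht).symm⟩

lemma merge {V : Type*} [Fintype V] {G F : SimpleGraph V} (hFG : F ≤ G)
    (hF2 : ∀ v, (F.neighborSet v).ncard = 2)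
    (hmin : ∀ F' : SimpleGraph V, F' ≤ G → (∀ v, (F'.neighborSet v).ncard = 2) →
      Nat.card F.ConnectedComponent ≤ Nat.card F'.ConnectedComponent)
    {p q p' q' : V} (hpp' : F.Adj p p') (hqq' : F.Adj q q')
    (hcomp : F.connectedComponentMk p ≠ F.connectedComponentMk q)
    (hpq : G.Adj p q) (hp'q' : G.Adj p' q') : False := by
  classical
  have hcp' : F.connectedComponentMk p' = F.connectedComponentMk p :=
    (ConnectedComponent.connectedComponentMk_eq_of_adj hpp').symm
  have hcq' : F.connectedComponentMk q' = F.connectedComponentMk q :=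
    (ConnectedComponent.connectedComponentMk_eq_of_adj hqq').symm
  have hPQ : ∀ x y : V, F.connectedComponentMk x = F.connectedComponentMk p →
      F.connectedComponentMk y = F.connectedComponentMk q → x ≠ y := by
    rintro x y hx hy rfl
    exact hcomp (hx ▸ hy ▸ rfl)
  have dpq : p ≠ q := hPQ p q rfl rfl
  have dpq' : p ≠ q' := hPQ p q' rfl hcq'
  have dp'q : p' ≠ q := hPQ p' q hcp' rfl
  have dp'q' : p' ≠ q' := hPQ p' q' hcp' hcq'
  have dpp' : p ≠ p' := hpp'.ne
  have dqq' : q ≠ q' := hqq'.ne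
  -- other neighbours
  obtain ⟨p2, hp2adj, hp2ne, hp2all⟩ := exists_other hF2 hpp'
  obtain ⟨q2, hq2adj, hq2ne, hq2all⟩ := exists_other hF2 hqq'
  obtain ⟨p3, hp3adj, hp3ne, hp3all⟩ := exists_other hF2 hpp'.symm
  obtain ⟨q3, hq3adj, hq3ne, hq3all⟩ := exists_other hF2 hqq'.symm
  have hcp2 : F.connectedComponentMk p2 = F.connectedComponentMk p :=
    (ConnectedComponent.connectedComponentMk_eq_of_adj hp2adj).symm
  have hcq2 : F.connectedComponentMk q2 = F.connectedComponentMk q :=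
    (ConnectedComponent.connectedComponentMk_eq_of_adj hq2adj).symm
  have hcp3 : F.connectedComponentMk p3 = F.connectedComponentMk p := by
    rw [(ConnectedComponent.connectedComponentMk_eq_of_adj hp3adj).symm]; exact hcp'
  have hcq3 : F.connectedComponentMk q3 = F.connectedComponentMk q := by
    rw [(ConnectedComponent.connectedComponentMk_eq_of_adj hq3adj).symm]; exact hcq'
  set F' : SimpleGraph V :=
    F.deleteEdges {s(p, p'), s(q, q')} ⊔ SimpleGraph.fromEdgeSet {s(p, q), s(p', q')} with hF'def
  have hadj' : ∀ x y, F'.Adj x y ↔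
      (F.Adj x y ∧ ¬((x = p ∧ y = p') ∨ (x = p' ∧ y = p)) ∧
        ¬((x = q ∧ y = q') ∨ (x = q' ∧ y = q))) ∨
      ((x = p ∧ y = q) ∨ (x = q ∧ y = p)) ∨ ((x = p' ∧ y = q') ∨ (x = q' ∧ y = p')) := by
    intro x y
    rw [hF'def]
    simp only [SimpleGraph.sup_adj, SimpleGraph.deleteEdges_adj, SimpleGraph.fromEdgeSet_adj,
      Set.mem_insert_iff, Set.mem_singleton_iff, Sym2.eq_iff, not_or]
    constructor
    · rintro (⟨ha, h1, h2⟩ | ⟨h, -⟩)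
      · exact Or.inl ⟨ha, h1, h2⟩
      · exact Or.inr h
    · rintro (⟨ha, h1, h2⟩ | h)
      · exact Or.inl ⟨ha, h1, h2⟩
      · refine Or.inr ⟨h, ?_⟩
        rcases h with (⟨rfl, rfl⟩ | ⟨rfl, rfl⟩) | (⟨rfl, rfl⟩ | ⟨rfl, rfl⟩)
        · exact dpq
        · exact dpq.symm
        · exact dp'q'
        · exact dp'q'.symm
  have e1 : ∀ y, F'.Adj p y ↔ (F.Adj p y ∧ y ≠ p') ∨ y = q := by
    intro y
    rw [hadj']
    have h0 : p = p := rfl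
    tauto
  have e2 : ∀ y, F'.Adj p' y ↔ (F.Adj p' y ∧ y ≠ p) ∨ y = q' := by
    intro y
    rw [hadj']
    have h0 : p' = p' := rfl
    tauto
  have e3 : ∀ y, F'.Adj q y ↔ (F.Adj q y ∧ y ≠ q') ∨ y = p := by
    intro y
    rw [hadj']
    have h0 : q = q := rfl
    tauto
  have e4 : ∀ y, F'.Adj q' y ↔ (F.Adj q' y ∧ y ≠ q) ∨ y = p' := by
    intro y
    rw [hadj']
    have h0 : q' = q' := rfl
    tauto
  have eout : ∀ x, x ≠ p → x ≠ p' → x ≠ q → x ≠ q' → ∀ y, F'.Adj x y ↔ F.Adj x y := by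
    intro x h1 h2 h3 h4 y
    rw [hadj']
    tauto
  have hs1 : F'.neighborSet p = {p2, q} := by
    ext y
    simp only [SimpleGraph.mem_neighborSet, e1, Set.mem_insert_iff, Set.mem_singleton_iff]
    constructor
    · rintro (⟨ha, hne⟩ | rfl)
      · rcases hp2all y ha with rfl | rfl
        · exact absurd rfl hne
        · exact Or.inl rfl
      · exact Or.inr rfl
    · rintro (rfl | rfl)
      · exact Or.inl ⟨hp2adj, hp2ne⟩
      · exact Or.inr rfl
  have hs2 : F'.neighborSet p' = {p3, q'} := by
    ext y
    simp only [SimpleGraph.mem_neighborSet, e2, Set.mem_insert_iff, Set.mem_singleton_iff]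
    constructor
    · rintro (⟨ha, hne⟩ | rfl)
      · rcases hp3all y ha with rfl | rfl
        · exact absurd rfl hne
        · exact Or.inl rfl
      · exact Or.inr rfl
    · rintro (rfl | rfl)
      · exact Or.inl ⟨hp3adj, hp3ne⟩
      · exact Or.inr rfl
  have hs3 : F'.neighborSet q = {q2, p} := by
    ext y
    simp only [SimpleGraph.mem_neighborSet, e3, Set.mem_insert_iff, Set.mem_singleton_iff]
    constructor
    · rintro (⟨ha, hne⟩ | rfl)
      · rcases hq2all y ha with rfl | rfl
        · exact absurd rfl hne
        · exact Or.inl rfl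
      · exact Or.inr rfl
    · rintro (rfl | rfl)
      · exact Or.inl ⟨hq2adj, hq2ne⟩
      · exact Or.inr rfl
  have hs4 : F'.neighborSet q' = {q3, p'} := by
    ext y
    simp only [SimpleGraph.mem_neighborSet, e4, Set.mem_insert_iff, Set.mem_singleton_iff]
    constructor
    · rintro (⟨ha, hne⟩ | rfl)
      · rcases hq3all y ha with rfl | rfl
        · exact absurd rfl hne
        · exact Or.inl rfl
      · exact Or.inr rfl
    · rintro (rfl | rfl)
      · exact Or.inl ⟨hq3adj, hq3ne⟩
      · exact Or.inr rfl
  have hreg : ∀ v, (F'.neighborSet v).ncard = 2 := by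
    intro v
    by_cases h1 : v = p
    · subst h1; rw [hs1]; exact Set.ncard_pair (hPQ p2 q hcp2 rfl)
    by_cases h2 : v = p'
    · subst h2; rw [hs2]; exact Set.ncard_pair (hPQ p3 q' hcp3 hcq')
    by_cases h3 : v = q
    · subst h3; rw [hs3]
      exact Set.ncard_pair (fun h => (hPQ p q2 rfl hcq2) h.symm)
    by_cases h4 : v = q'
    · subst h4; rw [hs4]
      exact Set.ncard_pair (fun h => (hPQ p' q3 hcp' hcq3) h.symm)
    · have : F'.neighborSet v = F.neighborSet v := by
        ext y; exact eout v h1 h2 h3 h4 y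
      rw [this]; exact hF2 v
  have hF'G : F' ≤ G := by
    intro x y h
    rw [hadj'] at h
    rcases h with ⟨ha, -, -⟩ | (⟨rfl, rfl⟩ | ⟨rfl, rfl⟩) | (⟨rfl, rfl⟩ | ⟨rfl, rfl⟩)
    · exact hFG ha
    · exact hpq
    · exact hpq.symm
    · exact hp'q'
    · exact hp'q'.symm
  -- the deleted graph
  set F0 : SimpleGraph V := F.deleteEdges {s(p, p'), s(q, q')} with hF0def
  have hadj0 : ∀ x y, F0.Adj x y ↔
      F.Adj x y ∧ ¬((x = p ∧ y = p') ∨ (x = p' ∧ y = p)) ∧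
        ¬((x = q ∧ y = q') ∨ (x = q' ∧ y = q)) := by
    intro x y
    rw [hF0def]
    simp only [SimpleGraph.deleteEdges_adj, Set.mem_insert_iff, Set.mem_singleton_iff,
      Sym2.eq_iff, not_or]
  have hF0F' : F0 ≤ F' := le_sup_left
  have hF0F : F0 ≤ F := SimpleGraph.deleteEdges_le _
  have eout0 : ∀ x, x ≠ p → x ≠ p' → x ≠ q → x ≠ q' → F0.neighborSet x = F.neighborSet x := by
    intro x h1 h2 h3 h4
    ext y
    simp only [SimpleGraph.mem_neighborSet]
    rw [hadj0]
    tauto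
  have hnp : F0.neighborSet p = {p2} := by
    ext y
    simp only [SimpleGraph.mem_neighborSet, Set.mem_singleton_iff]
    rw [hadj0]
    constructor
    · rintro ⟨ha, h1, h2⟩
      rcases hp2all y ha with rfl | rfl
      · exact absurd (Or.inl ⟨rfl, rfl⟩) h1
      · rfl
    · rintro rfl
      refine ⟨hp2adj, ?_, ?_⟩
      · rintro (⟨-, rfl⟩ | ⟨rfl, -⟩)
        · exact hp2ne rfl
        · exact dpp' rfl
      · rintro (⟨rfl, -⟩ | ⟨rfl, -⟩)
        · exact dpq rfl
        · exact dpq' rfl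
  have hnq : F0.neighborSet q = {q2} := by
    ext y
    simp only [SimpleGraph.mem_neighborSet, Set.mem_singleton_iff]
    rw [hadj0]
    constructor
    · rintro ⟨ha, h1, h2⟩
      rcases hq2all y ha with rfl | rfl
      · exact absurd (Or.inl ⟨rfl, rfl⟩) h2
      · rfl
    · rintro rfl
      refine ⟨hq2adj, ?_, ?_⟩
      · rintro (⟨rfl, -⟩ | ⟨rfl, -⟩)
        · exact dpq.symm rfl
        · exact dp'q.symm rfl
      · rintro (⟨-, rfl⟩ | ⟨rfl, -⟩)
        · exact hq2ne rfl
        · exact dqq' rfl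
  have hclassify : ∀ a a2 : V, F0.neighborSet a = {a2} →
      ∃ y, y ≠ a ∧ (y = p ∨ y = p' ∨ y = q ∨ y = q') ∧ F0.Reachable a y := by
    intro a a2 hna
    obtain ⟨y, hyne, hyodd, hyr⟩ := oddcomp F0 a (by rw [hna, Set.ncard_singleton]; exact odd_one)
    refine ⟨y, hyne, ?_, hyr⟩
    by_contra hy
    push_neg at hy
    obtain ⟨h1, h2, h3, h4⟩ := hy
    rw [eout0 y h1 h2 h3 h4, hF2 y] at hyodd
    exact (Nat.not_odd_iff_even.mpr (by decide)) hyodd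
  have hreach_q : F0.Reachable q q' := by
    obtain ⟨y, hyne, hyloc, hyr⟩ := hclassify q q2 hnq
    rcases hyloc with rfl | rfl | rfl | rfl
    · exact absurd (SimpleGraph.ConnectedComponent.sound (hyr.mono hF0F)).symm hcomp
    · exact (hcomp ((SimpleGraph.ConnectedComponent.sound (hyr.mono hF0F)).trans hcp').symm).elim
    · exact absurd rfl hyne
    · exact hyr
  have hreach_p : F0.Reachable p p' := by
    obtain ⟨y, hyne, hyloc, hyr⟩ := hclassify p p2 hnp
    rcases hyloc with rfl | rfl | rfl | rfl
    · exact absurd rfl hyne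
    · exact hyr
    · exact absurd (SimpleGraph.ConnectedComponent.sound (hyr.mono hF0F)) hcomp
    · exact absurd ((SimpleGraph.ConnectedComponent.sound (hyr.mono hF0F)).trans hcq') hcomp
  -- every F-edge gives F'-reachability
  have hF'pq : F'.Adj p q := by
    rw [hadj']
    exact Or.inr (Or.inl (Or.inl ⟨rfl, rfl⟩))
  have hF'p'q' : F'.Adj p' q' := by
    rw [hadj']
    exact Or.inr (Or.inr (Or.inl ⟨rfl, rfl⟩))
  have hstep : ∀ a b : V, F.Adj a b → F'.Reachable a b := by
    intro a b hab
    by_cases h1 : (a = p ∧ b = p') ∨ (a = p' ∧ b = p)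
    · have hr : F'.Reachable p p' :=
        (hF'pq.reachable.trans (hreach_q.mono hF0F')).trans hF'p'q'.symm.reachable
      rcases h1 with ⟨rfl, rfl⟩ | ⟨rfl, rfl⟩
      · exact hr
      · exact hr.symm
    by_cases h2 : (a = q ∧ b = q') ∨ (a = q' ∧ b = q)
    · have hr : F'.Reachable q q' := hreach_q.mono hF0F'
      rcases h2 with ⟨rfl, rfl⟩ | ⟨rfl, rfl⟩
      · exact hr
      · exact hr.symm
    · refine SimpleGraph.Adj.reachable ?_
      rw [hadj']
      exact Or.inl ⟨hab, h1, h2⟩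
  have hwalk : ∀ {a b : V}, F.Walk a b →
      F'.connectedComponentMk a = F'.connectedComponentMk b := by
    intro a b w
    induction w with
    | nil => rfl
    | cons h _ ih =>
      exact (SimpleGraph.ConnectedComponent.sound (hstep _ _ h)).trans ih
  let φ : F.ConnectedComponent → F'.ConnectedComponent :=
    SimpleGraph.ConnectedComponent.lift (fun v => F'.connectedComponentMk v)
      (fun v w pwalk _ => hwalk pwalk)
  have hsurj : Function.Surjective φ := by
    intro d
    refine SimpleGraph.ConnectedComponent.ind (fun v => ?_) d
    exact ⟨F.connectedComponentMk v, rfl⟩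
  have hle : Nat.card F'.ConnectedComponent ≤ Nat.card F.ConnectedComponent :=
    Nat.card_le_card_of_surjective φ hsurj
  have hge := hmin F' hF'G hreg
  have hbij : Function.Bijective φ :=
    (Nat.bijective_iff_surjective_and_card φ).mpr ⟨hsurj, le_antisymm hge hle⟩
  have : F.connectedComponentMk p = F.connectedComponentMk q := by
    apply hbij.injective
    exact SimpleGraph.ConnectedComponent.sound hF'pq.reachable
  exact hcomp this

instance starStarDecidable : DecidableRel (starStar 1 3).Adj := fun a b =>
  decidable_of_iff _ (SimpleGraph.fromRel_adj _ a b).symm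

lemma sfreeApp {V : Type*} {G : SimpleGraph V} (hfree : SFree 1 3 G)
    (w0 w1 w2 w3 w4 w5 : V)
    (a01 : G.Adj w0 w1) (a02 : G.Adj w0 w2) (a13 : G.Adj w1 w3)
    (a14 : G.Adj w1 w4) (a15 : G.Adj w1 w5)
    (n03 : ¬G.Adj w0 w3) (n04 : ¬G.Adj w0 w4) (n05 : ¬G.Adj w0 w5)
    (n12 : ¬G.Adj w1 w2) (n23 : ¬G.Adj w2 w3) (n24 : ¬G.Adj w2 w4) (n25 : ¬G.Adj w2 w5)
    (n34 : ¬G.Adj w3 w4) (n35 : ¬G.Adj w3 w5) (n45 : ¬G.Adj w4 w5)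
    (d03 : w0 ≠ w3) (d04 : w0 ≠ w4) (d05 : w0 ≠ w5) (d12 : w1 ≠ w2)
    (d23 : w2 ≠ w3) (d24 : w2 ≠ w4) (d25 : w2 ≠ w5)
    (d34 : w3 ≠ w4) (d35 : w3 ≠ w5) (d45 : w4 ≠ w5) : False := by
  have a10 := a01.symm; have a20 := a02.symm; have a31 := a13.symm
  have a41 := a14.symm; have a51 := a15.symm
  have n30 : ¬G.Adj w3 w0 := fun h => n03 h.symm
  have n40 : ¬G.Adj w4 w0 := fun h => n04 h.symm
  have n50 : ¬G.Adj w5 w0 := fun h => n05 h.symm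
  have n21 : ¬G.Adj w2 w1 := fun h => n12 h.symm
  have n32 : ¬G.Adj w3 w2 := fun h => n23 h.symm
  have n42 : ¬G.Adj w4 w2 := fun h => n24 h.symm
  have n52 : ¬G.Adj w5 w2 := fun h => n25 h.symm
  have n43 : ¬G.Adj w4 w3 := fun h => n34 h.symm
  have n53 : ¬G.Adj w5 w3 := fun h => n35 h.symm
  have n54 : ¬G.Adj w5 w4 := fun h => n45 h.symm
  have i0 : ¬G.Adj w0 w0 := G.irrefl
  have i1 : ¬G.Adj w1 w1 := G.irrefl
  have i2 : ¬G.Adj w2 w2 := G.irrefl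
  have i3 : ¬G.Adj w3 w3 := G.irrefl
  have i4 : ¬G.Adj w4 w4 := G.irrefl
  have i5 : ¬G.Adj w5 w5 := G.irrefl
  have d01 := a01.ne; have d02 := a02.ne; have d13 := a13.ne
  have d14 := a14.ne; have d15 := a15.ne
  have d10 := d01.symm; have d20 := d02.symm; have d30 := d03.symm
  have d40 := d04.symm; have d50 := d05.symm; have d21 := d12.symm
  have d31 := d13.symm; have d41 := d14.symm; have d51 := d15.symm
  have d32 := d23.symm; have d42 := d24.symm; have d52 := d25.symm
  have d43 := d34.symm; have d53 := d35.symm; have d54 := d45.symm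
  apply hfree
  have hinj : Function.Injective ![w0, w1, w2, w3, w4, w5] := by
    intro i j h
    fin_cases i <;> fin_cases j <;>
      first
        | rfl
        | exact absurd h (by first | exact d01 | exact d02 | exact d03 | exact d04 | exact d05 | exact d12 | exact d13 | exact d14 | exact d15 | exact d23 | exact d24 | exact d25 | exact d34 | exact d35 | exact d45 | exact d10 | exact d20 | exact d30 | exact d40 | exact d50 | exact d21 | exact d31 | exact d41 | exact d51 | exact d32 | exact d42 | exact d52 | exact d43 | exact d53 | exact d54)
  refine ⟨⟨![w0, w1, w2, w3, w4, w5], hinj⟩, ?_⟩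
  intro a b
  fin_cases a <;> fin_cases b <;>
    first
      | exact iff_of_false (by first | exact i0 | exact i1 | exact i2 | exact i3 | exact i4 | exact i5 | exact n03 | exact n04 | exact n05 | exact n12 | exact n23 | exact n24 | exact n25 | exact n34 | exact n35 | exact n45 | exact n30 | exact n40 | exact n50 | exact n21 | exact n32 | exact n42 | exact n52 | exact n43 | exact n53 | exact n54) (by decide)
      | exact iff_of_true (by first | exact a01 | exact a02 | exact a13 | exact a14 | exact a15 | exact a10 | exact a20 | exact a31 | exact a41 | exact a51) (by decide)

lemma two_nbrs {V : Type*} [Fintype V] {F : SimpleGraph V}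
    (hF2 : ∀ v, (F.neighborSet v).ncard = 2) (x : V) :
    ∃ a b, a ≠ b ∧ F.Adj x a ∧ F.Adj x b ∧ ∀ t, F.Adj x t → t = a ∨ t = b := by
  obtain ⟨a, b, hab, hset⟩ := Set.ncard_eq_two.mp (hF2 x)
  have hmem : ∀ t, F.Adj x t ↔ t = a ∨ t = b := by
    intro t
    constructor
    · intro ht
      have : t ∈ ({a, b} : Set V) := hset ▸ ht
      simpa using this
    · intro ht
      have : t ∈ ({a, b} : Set V) := by simpa using ht
      rw [← hset] at this
      exact this
  exact ⟨a, b, hab, (hmem a).mpr (Or.inl rfl), (hmem b).mpr (Or.inr rfl),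
    fun t ht => (hmem t).mp ht⟩

lemma nbr_forall {V : Type*} [Fintype V] {F : SimpleGraph V}
    (hF2 : ∀ v, (F.neighborSet v).ncard = 2) {x r s : V}
    (hr : F.Adj x r) (hs : F.Adj x s) (hrs : r ≠ s) :
    ∀ t, F.Adj x t → t = r ∨ t = s := by
  obtain ⟨a, b, hab, ha, hb, hall⟩ := two_nbrs hF2 x
  rcases hall r hr with rfl | rfl <;> rcases hall s hs with rfl | rfl
  · exact absurd rfl hrs
  · exact hall
  · intro t ht
    exact (hall t ht).symm
  · exact absurd rfl hrs

lemma pick_nbr {V : Type*} [Fintype V] {G : SimpleGraph V} {v : V}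
    (hdeg : 4 ≤ (G.neighborSet v).ncard) (a b c : V) :
    ∃ z, G.Adj v z ∧ z ≠ a ∧ z ≠ b ∧ z ≠ c := by
  by_contra hcon
  push_neg at hcon
  have hsub : G.neighborSet v ⊆ {a, b, c} := by
    intro t ht
    by_cases h1 : t = a
    · exact Or.inl h1
    by_cases h2 : t = b
    · exact Or.inr (Or.inl h2)
    · exact Or.inr (Or.inr (hcon t ht h1 h2))
  have h1 := Set.ncard_le_ncard hsub (Set.toFinite _)
  have h2 : ({a, b, c} : Set V).ncard ≤ 3 := by
    refine (Set.ncard_insert_le _ _).trans ?_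
    have := (Set.ncard_insert_le b ({c} : Set V)).trans (by rw [Set.ncard_singleton])
    omega
  omega

lemma walk_closed {V : Type*} {F : SimpleGraph V} {S : Set V}
    (hclosed : ∀ ⦃x y : V⦄, x ∈ S → F.Adj x y → y ∈ S) :
    ∀ {x y : V}, F.Walk x y → x ∈ S → y ∈ S := by
  intro x y w
  induction w with
  | nil => exact id
  | cons h _ ih => exact fun hx => ih (hclosed hx h)

lemma cross_edge {V : Type*} {G : SimpleGraph V} {S : Set V} :
    ∀ {x y : V}, G.Walk x y → x ∈ S → y ∉ S → ∃ u v, u ∈ S ∧ v ∉ S ∧ G.Adj u v := by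
  intro x y w
  induction w with
  | nil => exact fun hx hy => absurd hx hy
  | @cons x m y h p ih =>
    intro hx hy
    by_cases hm : m ∈ S
    · exact ih hm hy
    · exact ⟨x, m, hx, hm, h⟩


/-- If `F` is a disconnected `2`-factor with the minimum number of components of a
connected balanced `S_{1,3}`-free bipartite graph with minimum degree at least `4`, then
every component of `F` is a `4`-cycle. -/
theorem stmt10 {V : Type*} [Fintype V] (G : SimpleGraph V)
    (X Y : Set V) (hbip : IsBipartition G X Y) (hbal : X.ncard = Y.ncard)
    (hconn : G.Connected) (hfree : SFree 1 3 G)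
    (hdeg : ∀ v, 4 ≤ (G.neighborSet v).ncard)
    (F : SimpleGraph V) (hFG : F ≤ G) (hF2 : ∀ v, (F.neighborSet v).ncard = 2)
    (hmin : ∀ F' : SimpleGraph V, F' ≤ G → (∀ v, (F'.neighborSet v).ncard = 2) →
      Nat.card F.ConnectedComponent ≤ Nat.card F'.ConnectedComponent)
    (hdisc : ¬ F.Connected) (c : F.ConnectedComponent) :
    Nonempty (F.induce c.supp ≃g cycleGraph 4) := by
  classical
  obtain ⟨htotal, hdisj, hadjXY⟩ := hbip
  set π : V → Prop := fun x => x ∈ X with hπ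
  have hopp : ∀ {x y : V}, G.Adj x y → (π x ↔ ¬ π y) := by
    intro x y h
    rcases hadjXY h with ⟨hx, hy⟩ | ⟨hx, hy⟩
    · exact ⟨fun _ hy' => Set.disjoint_left.mp hdisj hy' hy, fun _ => hx⟩
    · exact ⟨fun hx' => absurd hx (Set.disjoint_left.mp hdisj hx'),
        fun h' => absurd hy h'⟩
  have hnonadj : ∀ {x y : V}, (π x ↔ π y) → ¬ G.Adj x y := by
    intro x y hiff hadj
    have := hopp hadj
    tauto
  have hne_side : ∀ {x y : V}, (π x ↔ ¬ π y) → x ≠ y := by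
    rintro x y hiff rfl
    tauto
  set mkF := F.connectedComponentMk with hmkF
  have hne_comp : ∀ {x y : V}, mkF x ≠ mkF y → x ≠ y := by
    rintro x y h rfl
    exact h rfl
  have hFadj_comp : ∀ {x y : V}, F.Adj x y → mkF x = mkF y := fun h =>
    SimpleGraph.ConnectedComponent.connectedComponentMk_eq_of_adj h
  have M : ∀ {p q p' q' : V}, F.Adj p p' → F.Adj q q' → mkF p ≠ mkF q →
      G.Adj p q → ¬ G.Adj p' q' := by
    intro p q p' q' h1 h2 h3 h4 h5
    exact merge hFG hF2 hmin h1 h2 h3 h4 h5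
  -- find a crossing edge out of the component c
  obtain ⟨u0, hu0⟩ := c.exists_rep
  have hW : ∃ w : V, w ∉ c.supp := by
    by_contra hcon
    push_neg at hcon
    apply hdisc
    rw [SimpleGraph.connected_iff]
    refine ⟨fun x y => ?_, ⟨u0⟩⟩
    have hx := (SimpleGraph.ConnectedComponent.mem_supp_iff c x).mp (hcon x)
    have hy := (SimpleGraph.ConnectedComponent.mem_supp_iff c y).mp (hcon y)
    exact SimpleGraph.ConnectedComponent.exact (hx.trans hy.symm)
  obtain ⟨w, hw⟩ := hW
  have hu0supp : u0 ∈ c.supp := by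
    rw [SimpleGraph.ConnectedComponent.mem_supp_iff]
    exact hu0
  obtain ⟨wk⟩ := hconn.preconnected u0 w
  obtain ⟨u, v, hu, hv, huv⟩ := cross_edge wk hu0supp hw
  have hcu : mkF u = c := (SimpleGraph.ConnectedComponent.mem_supp_iff c u).mp hu
  have hcv : mkF v ≠ c := fun h =>
    hv ((SimpleGraph.ConnectedComponent.mem_supp_iff c v).mpr h)
  have hCD : mkF u ≠ mkF v := fun h => hcv (h.symm.trans hcu)
  have hDC : mkF v ≠ mkF u := fun h => hCD h.symm
  -- neighbours
  obtain ⟨up, um, hupum, hadj_uup, hadj_uum, hallu⟩ := two_nbrs hF2 u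
  obtain ⟨vp, vm, hvpvm, hadj_vvp, hadj_vvm, hallv⟩ := two_nbrs hF2 v
  obtain ⟨a, hadj_upa, ha_ne_u, hallup⟩ := exists_other hF2 hadj_uup.symm
  obtain ⟨b, hadj_umb, hb_ne_u, hallum⟩ := exists_other hF2 hadj_uum.symm
  have cup : mkF up = mkF u := (hFadj_comp hadj_uup).symm
  have cum : mkF um = mkF u := (hFadj_comp hadj_uum).symm
  have ca : mkF a = mkF u := ((hFadj_comp hadj_upa).symm).trans cup
  have cb : mkF b = mkF u := ((hFadj_comp hadj_umb).symm).trans cum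
  have cvp : mkF vp = mkF v := (hFadj_comp hadj_vvp).symm
  have cvm : mkF vm = mkF v := (hFadj_comp hadj_vvm).symm
  -- sides
  have s1 : π u ↔ ¬ π v := hopp huv
  have s2 : π u ↔ ¬ π up := hopp (hFG hadj_uup)
  have s3 : π u ↔ ¬ π um := hopp (hFG hadj_uum)
  have s4 : π v ↔ ¬ π vp := hopp (hFG hadj_vvp)
  have s5 : π v ↔ ¬ π vm := hopp (hFG hadj_vvm)
  have s6 : π up ↔ ¬ π a := hopp (hFG hadj_upa)
  have s7 : π um ↔ ¬ π b := hopp (hFG hadj_umb)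
  have oppS : ∀ {x y : V}, (π x ↔ ¬ π y) → (π y ↔ ¬ π x) := fun h => iff_not_comm.mp h
  have oppT : ∀ {x y w : V}, (π x ↔ ¬ π y) → (π y ↔ ¬ π w) → (π x ↔ π w) :=
    fun h1 h2 => h1.trans (iff_not_comm.mp h2).symm
  have oppE : ∀ {x y w : V}, (π x ↔ ¬ π y) → (π y ↔ π w) → (π x ↔ ¬ π w) :=
    fun h1 h2 => h1.trans (not_congr h2)
  have sameEE : ∀ {x y : V}, (π x ↔ π u) → (π y ↔ π u) → (π x ↔ π y) :=
    fun h1 h2 => h1.trans h2.symm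
  have sameOO : ∀ {x y : V}, (π x ↔ ¬ π u) → (π y ↔ ¬ π u) → (π x ↔ π y) :=
    fun h1 h2 => h1.trans h2.symm
  have diffEO : ∀ {x y : V}, (π x ↔ π u) → (π y ↔ ¬ π u) → (π x ↔ ¬ π y) :=
    fun h1 h2 => h1.trans (iff_not_comm.mp h2)
  have diffOE : ∀ {x y : V}, (π x ↔ ¬ π u) → (π y ↔ π u) → (π x ↔ ¬ π y) :=
    fun h1 h2 => h1.trans (not_congr h2.symm)
  have e_u : π u ↔ π u := Iff.rfl
  have o_v : π v ↔ ¬ π u := oppS s1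
  have o_up : π up ↔ ¬ π u := oppS s2
  have o_um : π um ↔ ¬ π u := oppS s3
  have e_vp : π vp ↔ π u := oppT (oppS s4) o_v
  have e_vm : π vm ↔ π u := oppT (oppS s5) o_v
  have e_a : π a ↔ π u := oppT (oppS s6) o_up
  have e_b : π b ↔ π u := oppT (oppS s7) o_um
  -- the four basic non-adjacencies from minimality
  have n1 : ¬G.Adj up vp := M hadj_uup hadj_vvp hCD huv
  have n2 : ¬G.Adj up vm := M hadj_uup hadj_vvm hCD huv
  have n3 : ¬G.Adj um vp := M hadj_uum hadj_vvp hCD huv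
  have n4 : ¬G.Adj um vm := M hadj_uum hadj_vvm hCD huv
  -- pick z
  obtain ⟨z, hvz, hz_u, hz_vp, hz_vm⟩ := pick_nbr (hdeg v) u vp vm
  have s8 : π v ↔ ¬ π z := hopp hvz
  have e_z : π z ↔ π u := oppT (oppS s8) o_v
  have azp : G.Adj up z := by
    by_contra hn
    exact sfreeApp hfree u v up vp vm z
      huv (hFG hadj_uup) (hFG hadj_vvp) (hFG hadj_vvm) hvz
      (hnonadj (sameEE e_u e_vp)) (hnonadj (sameEE e_u e_vm)) (hnonadj (sameEE e_u e_z))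
      (hnonadj (sameOO o_v o_up)) n1 n2 hn
      (hnonadj (sameEE e_vp e_vm)) (hnonadj (sameEE e_vp e_z)) (hnonadj (sameEE e_vm e_z))
      (hne_comp (by rw [cvp]; exact hCD)) (hne_comp (by rw [cvm]; exact hCD))
      hz_u.symm (hne_comp (by rw [cup]; exact hDC))
      (hne_comp (by rw [cup, cvp]; exact hCD)) (hne_comp (by rw [cup, cvm]; exact hCD))
      (hne_side (diffOE o_up e_z)) hvpvm hz_vp.symm hz_vm.symm
  have azm : G.Adj um z := by
    by_contra hn
    exact sfreeApp hfree u v um vp vm z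
      huv (hFG hadj_uum) (hFG hadj_vvp) (hFG hadj_vvm) hvz
      (hnonadj (sameEE e_u e_vp)) (hnonadj (sameEE e_u e_vm)) (hnonadj (sameEE e_u e_z))
      (hnonadj (sameOO o_v o_um)) n3 n4 hn
      (hnonadj (sameEE e_vp e_vm)) (hnonadj (sameEE e_vp e_z)) (hnonadj (sameEE e_vm e_z))
      (hne_comp (by rw [cvp]; exact hCD)) (hne_comp (by rw [cvm]; exact hCD))
      hz_u.symm (hne_comp (by rw [cum]; exact hDC))
      (hne_comp (by rw [cum, cvp]; exact hCD)) (hne_comp (by rw [cum, cvm]; exact hCD))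
      (hne_side (diffOE o_um e_z)) hvpvm hz_vp.symm hz_vm.symm
  -- the key claim : a = b
  have hab : a = b := by
    by_contra hab
    obtain ⟨zp, zm, hzpzm, hadj_zzp, hadj_zzm, hallz⟩ := two_nbrs hF2 z
    have s9 : π z ↔ ¬ π zp := hopp (hFG hadj_zzp)
    have s10 : π z ↔ ¬ π zm := hopp (hFG hadj_zzm)
    have o_zp : π zp ↔ ¬ π u := oppE (oppS s9) e_z
    have o_zm : π zm ↔ ¬ π u := oppE (oppS s10) e_z
    have czp : mkF zp = mkF z := (hFadj_comp hadj_zzp).symm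
    have czm : mkF zm = mkF z := (hFadj_comp hadj_zzm).symm
    by_cases hzC : mkF z = mkF u
    · -- z lies in the component of u
      have hzD : mkF z ≠ mkF v := by rw [hzC]; exact hCD
      have nz1 : ¬G.Adj zp vp := M hadj_zzp hadj_vvp hzD hvz.symm
      have nz2 : ¬G.Adj zp vm := M hadj_zzp hadj_vvm hzD hvz.symm
      have nz3 : ¬G.Adj zm vp := M hadj_zzm hadj_vvp hzD hvz.symm
      have nz4 : ¬G.Adj zm vm := M hadj_zzm hadj_vvm hzD hvz.symm
      have hzpu : G.Adj u zp := by
        by_contra hn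
        exact sfreeApp hfree z v zp vp vm u
          hvz.symm (hFG hadj_zzp) (hFG hadj_vvp) (hFG hadj_vvm) huv.symm
          (hnonadj (sameEE e_z e_vp)) (hnonadj (sameEE e_z e_vm)) (hnonadj (sameEE e_z e_u))
          (hnonadj (sameOO o_v o_zp)) nz1 nz2 (fun h => hn h.symm)
          (hnonadj (sameEE e_vp e_vm)) (hnonadj (sameEE e_vp e_u)) (hnonadj (sameEE e_vm e_u))
          (hne_comp (by rw [hzC, cvp]; exact hCD)) (hne_comp (by rw [hzC, cvm]; exact hCD))
          hz_u (hne_comp (by rw [czp, hzC]; exact hDC))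
          (hne_comp (by rw [czp, hzC, cvp]; exact hCD))
          (hne_comp (by rw [czp, hzC, cvm]; exact hCD))
          (hne_side (diffOE o_zp e_u)) hvpvm
          (hne_comp (by rw [cvp]; exact hDC)) (hne_comp (by rw [cvm]; exact hDC))
      have hzmu : G.Adj u zm := by
        by_contra hn
        exact sfreeApp hfree z v zm vp vm u
          hvz.symm (hFG hadj_zzm) (hFG hadj_vvp) (hFG hadj_vvm) huv.symm
          (hnonadj (sameEE e_z e_vp)) (hnonadj (sameEE e_z e_vm)) (hnonadj (sameEE e_z e_u))
          (hnonadj (sameOO o_v o_zm)) nz3 nz4 (fun h => hn h.symm)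
          (hnonadj (sameEE e_vp e_vm)) (hnonadj (sameEE e_vp e_u)) (hnonadj (sameEE e_vm e_u))
          (hne_comp (by rw [hzC, cvp]; exact hCD)) (hne_comp (by rw [hzC, cvm]; exact hCD))
          hz_u (hne_comp (by rw [czm, hzC]; exact hDC))
          (hne_comp (by rw [czm, hzC, cvp]; exact hCD))
          (hne_comp (by rw [czm, hzC, cvm]; exact hCD))
          (hne_side (diffOE o_zm e_u)) hvpvm
          (hne_comp (by rw [cvp]; exact hDC)) (hne_comp (by rw [cvm]; exact hDC))
      have hzp_mem : zp = up ∨ zp = um := by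
        by_contra hn
        push_neg at hn
        obtain ⟨h1, h2⟩ := hn
        exact sfreeApp hfree v u vp up um zp
          huv.symm (hFG hadj_vvp) (hFG hadj_uup) (hFG hadj_uum) hzpu
          (hnonadj (sameOO o_v o_up)) (hnonadj (sameOO o_v o_um)) (hnonadj (sameOO o_v o_zp))
          (hnonadj (sameEE e_u e_vp)) (fun h => n1 h.symm) (fun h => n3 h.symm)
          (fun h => nz1 h.symm)
          (hnonadj (sameOO o_up o_um)) (hnonadj (sameOO o_up o_zp)) (hnonadj (sameOO o_um o_zp))
          (hne_comp (by rw [cup]; exact hDC)) (hne_comp (by rw [cum]; exact hDC))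
          (hne_comp (by rw [czp, hzC]; exact hDC))
          (hne_comp (by rw [cvp]; exact hCD))
          (hne_comp (by rw [cvp, cup]; exact hDC)) (hne_comp (by rw [cvp, cum]; exact hDC))
          (hne_comp (by rw [cvp, czp, hzC]; exact hDC))
          hupum h1.symm h2.symm
      have hzm_mem : zm = up ∨ zm = um := by
        by_contra hn
        push_neg at hn
        obtain ⟨h1, h2⟩ := hn
        exact sfreeApp hfree v u vp up um zm
          huv.symm (hFG hadj_vvp) (hFG hadj_uup) (hFG hadj_uum) hzmu
          (hnonadj (sameOO o_v o_up)) (hnonadj (sameOO o_v o_um)) (hnonadj (sameOO o_v o_zm))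
          (hnonadj (sameEE e_u e_vp)) (fun h => n1 h.symm) (fun h => n3 h.symm)
          (fun h => nz3 h.symm)
          (hnonadj (sameOO o_up o_um)) (hnonadj (sameOO o_up o_zm)) (hnonadj (sameOO o_um o_zm))
          (hne_comp (by rw [cup]; exact hDC)) (hne_comp (by rw [cum]; exact hDC))
          (hne_comp (by rw [czm, hzC]; exact hDC))
          (hne_comp (by rw [cvp]; exact hCD))
          (hne_comp (by rw [cvp, cup]; exact hDC)) (hne_comp (by rw [cvp, cum]; exact hDC))
          (hne_comp (by rw [cvp, czm, hzC]; exact hDC))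
          hupum h1.symm h2.symm
      have hzupum : F.Adj z up ∧ F.Adj z um := by
        rcases hzp_mem with h | h <;> rcases hzm_mem with h' | h'
        · exact absurd (h.trans h'.symm) hzpzm
        · exact ⟨h ▸ hadj_zzp, h' ▸ hadj_zzm⟩
        · exact ⟨h' ▸ hadj_zzm, h ▸ hadj_zzp⟩
        · exact absurd (h.trans h'.symm) hzpzm
      have hza : z = a := by
        rcases hallup z hzupum.1.symm with h | h
        · exact absurd h hz_u
        · exact h
      have hzb : z = b := by
        rcases hallum z hzupum.2.symm with h | h
        · exact absurd h hz_u
        · exact h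
      exact hab (hza.symm.trans hzb)
    · by_cases hzD : mkF z = mkF v
      · -- z lies in the component of v
        have hupz : mkF up ≠ mkF z := by rw [cup, hzD]; exact hCD
        have humz : mkF um ≠ mkF z := by rw [cum, hzD]; exact hCD
        have nU1 : ¬G.Adj u zp := M hadj_uup.symm hadj_zzp hupz azp
        have nU2 : ¬G.Adj u zm := M hadj_uup.symm hadj_zzm hupz azp
        have nA1 : ¬G.Adj a zp := M hadj_upa hadj_zzp hupz azp
        have nA2 : ¬G.Adj a zm := M hadj_upa hadj_zzm hupz azp
        have nB1 : ¬G.Adj b zp := M hadj_umb hadj_zzp humz azm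
        have nB2 : ¬G.Adj b zm := M hadj_umb hadj_zzm humz azm
        have hbup : G.Adj b up := by
          by_contra hn
          exact sfreeApp hfree um z b zp zm up
            azm (hFG hadj_umb) (hFG hadj_zzp) (hFG hadj_zzm) azp.symm
            (hnonadj (sameOO o_um o_zp)) (hnonadj (sameOO o_um o_zm)) (hnonadj (sameOO o_um o_up))
            (hnonadj (sameEE e_z e_b)) nB1 nB2 hn
            (hnonadj (sameOO o_zp o_zm)) (hnonadj (sameOO o_zp o_up)) (hnonadj (sameOO o_zm o_up))
            (hne_comp (by rw [cum, czp, hzD]; exact hCD))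
            (hne_comp (by rw [cum, czm, hzD]; exact hCD))
            hupum.symm
            (hne_comp (by rw [hzD, cb]; exact hDC))
            (hne_comp (by rw [cb, czp, hzD]; exact hCD))
            (hne_comp (by rw [cb, czm, hzD]; exact hCD))
            (hne_side (diffEO e_b o_up)) hzpzm
            (hne_comp (by rw [czp, hzD, cup]; exact hDC))
            (hne_comp (by rw [czm, hzD, cup]; exact hDC))
        exact sfreeApp hfree z up zp u a b
          azp.symm (hFG hadj_zzp) (hFG hadj_uup.symm) (hFG hadj_upa) hbup.symm
          (hnonadj (sameEE e_z e_u)) (hnonadj (sameEE e_z e_a)) (hnonadj (sameEE e_z e_b))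
          (hnonadj (sameOO o_up o_zp)) (fun h => nU1 h.symm) (fun h => nA1 h.symm)
          (fun h => nB1 h.symm)
          (hnonadj (sameEE e_u e_a)) (hnonadj (sameEE e_u e_b)) (hnonadj (sameEE e_a e_b))
          (hne_comp (by rw [hzD]; exact hDC))
          (hne_comp (by rw [hzD, ca]; exact hDC))
          (hne_comp (by rw [hzD, cb]; exact hDC))
          (hne_comp (by rw [cup, czp, hzD]; exact hCD))
          (hne_comp (by rw [czp, hzD]; exact hDC))
          (hne_comp (by rw [czp, hzD, ca]; exact hDC))
          (hne_comp (by rw [czp, hzD, cb]; exact hDC))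
          ha_ne_u.symm hb_ne_u.symm hab
      · -- z lies in a third component
        have hupz : mkF up ≠ mkF z := by rw [cup]; exact fun h => hzC h.symm
        have nU1 : ¬G.Adj u zp := M hadj_uup.symm hadj_zzp hupz azp
        have nzv1 : ¬G.Adj zp vp := M hadj_zzp hadj_vvp hzD hvz.symm
        have nzv2 : ¬G.Adj zp vm := M hadj_zzp hadj_vvm hzD hvz.symm
        exact sfreeApp hfree z v zp vp vm u
          hvz.symm (hFG hadj_zzp) (hFG hadj_vvp) (hFG hadj_vvm) huv.symm
          (hnonadj (sameEE e_z e_vp)) (hnonadj (sameEE e_z e_vm)) (hnonadj (sameEE e_z e_u))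
          (hnonadj (sameOO o_v o_zp)) nzv1 nzv2 (fun h => nU1 h.symm)
          (hnonadj (sameEE e_vp e_vm)) (hnonadj (sameEE e_vp e_u)) (hnonadj (sameEE e_vm e_u))
          (hne_comp (by rw [cvp]; exact hzD)) (hne_comp (by rw [cvm]; exact hzD))
          (hne_comp hzC)
          (hne_comp (by rw [czp]; exact fun h => hzD h.symm))
          (hne_comp (by rw [czp, cvp]; exact hzD)) (hne_comp (by rw [czp, cvm]; exact hzD))
          (hne_comp (by rw [czp]; exact hzC))
          hvpvm (hne_comp (by rw [cvp]; exact hDC)) (hne_comp (by rw [cvm]; exact hDC))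
  -- now assemble the 4-cycle
  subst hab
  have halla : ∀ t, F.Adj a t → t = up ∨ t = um :=
    nbr_forall hF2 hadj_upa.symm hadj_umb.symm hupum
  have hclosed : ∀ ⦃x y : V⦄, x ∈ ({u, up, a, um} : Set V) → F.Adj x y →
      y ∈ ({u, up, a, um} : Set V) := by
    intro x y hx hxy
    simp only [Set.mem_insert_iff, Set.mem_singleton_iff] at hx ⊢
    rcases hx with rfl | rfl | rfl | rfl
    · rcases hallu y hxy with rfl | rfl
      · exact Or.inr (Or.inl rfl)
      · exact Or.inr (Or.inr (Or.inr rfl))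
    · rcases hallup y hxy with rfl | rfl
      · exact Or.inl rfl
      · exact Or.inr (Or.inr (Or.inl rfl))
    · rcases halla y hxy with rfl | rfl
      · exact Or.inr (Or.inl rfl)
      · exact Or.inr (Or.inr (Or.inr rfl))
    · rcases hallum y hxy with rfl | rfl
      · exact Or.inl rfl
      · exact Or.inr (Or.inr (Or.inl rfl))
  have hsupp : c.supp = ({u, up, a, um} : Set V) := by
    ext x
    rw [SimpleGraph.ConnectedComponent.mem_supp_iff]
    constructor
    · intro hx
      have hr : F.Reachable u x :=
        SimpleGraph.ConnectedComponent.exact (hcu.trans hx.symm)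
      obtain ⟨wk'⟩ := hr
      exact walk_closed hclosed wk' (Set.mem_insert _ _)
    · intro hx
      simp only [Set.mem_insert_iff, Set.mem_singleton_iff] at hx
      rcases hx with rfl | rfl | rfl | rfl
      · exact hcu
      · exact cup.trans hcu
      · exact ca.trans hcu
      · exact cum.trans hcu
  rw [hsupp]
  -- distinctness and adjacency data for the four vertices
  have d1 : u ≠ up := hadj_uup.ne
  have d2 : u ≠ a := ha_ne_u.symm
  have d3 : u ≠ um := hadj_uum.ne
  have d4 : up ≠ a := hadj_upa.ne
  have d5 : up ≠ um := hupum
  have d6 : a ≠ um := fun h => hadj_umb.ne h.symm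
  have d1' := d1.symm; have d2' := d2.symm; have d3' := d3.symm
  have d4' := d4.symm; have d5' := d5.symm; have d6' := d6.symm
  have f1 : F.Adj u up := hadj_uup
  have f2 : F.Adj up a := hadj_upa
  have f3 : F.Adj a um := hadj_umb.symm
  have f4 : F.Adj um u := hadj_uum.symm
  have f1' := f1.symm; have f2' := f2.symm; have f3' := f3.symm; have f4' := f4.symm
  have g1 : ¬F.Adj u a := fun h => hnonadj (sameEE e_u e_a) (hFG h)
  have g2 : ¬F.Adj up um := fun h => hnonadj (sameOO o_up o_um) (hFG h)
  have g1' : ¬F.Adj a u := fun h => g1 h.symm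
  have g2' : ¬F.Adj um up := fun h => g2 h.symm
  have i1 : ¬F.Adj u u := F.irrefl
  have i2 : ¬F.Adj up up := F.irrefl
  have i3 : ¬F.Adj a a := F.irrefl
  have i4 : ¬F.Adj um um := F.irrefl
  have huS : u ∈ ({u, up, a, um} : Set V) := by simp
  have hupS : up ∈ ({u, up, a, um} : Set V) := by simp
  have haS : a ∈ ({u, up, a, um} : Set V) := by simp
  have humS : um ∈ ({u, up, a, um} : Set V) := by simp
  refine ⟨SimpleGraph.Iso.symm
    ⟨⟨![⟨u, huS⟩, ⟨up, hupS⟩, ⟨a, haS⟩, ⟨um, humS⟩],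
      fun x => if x.1 = u then (0 : Fin 4) else if x.1 = up then 1 else
        if x.1 = a then 2 else 3, ?_, ?_⟩, ?_⟩⟩
  · intro i
    fin_cases i <;> simp [d1, d2, d3, d4, d5, d6, d1', d2', d3', d4', d5', d6']
  · rintro ⟨x, hx⟩
    simp only [Set.mem_insert_iff, Set.mem_singleton_iff] at hx
    rcases hx with rfl | rfl | rfl | rfl <;>
      simp [d1, d2, d3, d4, d5, d6, d1', d2', d3', d4', d5', d6']
  · intro i j
    fin_cases i <;> fin_cases j <;>
      first
        | exact iff_of_true (by first | exact f1 | exact f2 | exact f3 | exact f4 | exact f1' | exact f2' | exact f3' | exact f4') (by decide)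
        | exact iff_of_false (by first | exact i1 | exact i2 | exact i3 | exact i4 | exact g1 | exact g2 | exact g1' | exact g2') (by decide)
end
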